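/- arXiv:2003.00782 — 6 statements merged into one kernel-verified Lean document; each statement's English description precedes it below -/
import Mathlib

section
/- The trace of ρ(α) lies in 2ℤ[ε] for every α in the integral group ring ℤ[G], i.e. tr(ρ(ℤ[G])) ⊆ 2ℤ[ε]. -/
open MonoidAlgebra

/-- The quaternion group of order 8. -/
abbrev Q8 : Type := QuaternionGroup 2

/-- The cyclic group of order `p`. -/
abbrev Cp (p : ℕ) : Type := Multiplicative (ZMod p)

/-- `G = Q₈ × C_p`. -/
abbrev Gp (p : ℕ) : Type := Q8 × Cp p

/-- The element `a` of `Q₈`. -/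
def aQ : Q8 := QuaternionGroup.a 1
/-- The element `b` of `Q₈`. -/
def bQ : Q8 := QuaternionGroup.xa 0
/-- The element `c = ab` of `Q₈`. -/
def cQ : Q8 := aQ * bQ
/-- The element `z = a²` of `Q₈`. -/
def zQ : Q8 := aQ * aQ
/-- The generator `t` of `C_p`. -/
def tC (p : ℕ) : Cp p := Multiplicative.ofAdd (1 : ZMod p)

/-- The inclusion `ℤ[G] → ℚ[G]` of an integral group ring into the rational group algebra. -/
noncomputable def iotaG (G : Type) [Monoid G] :
    MonoidAlgebra ℤ G →+* MonoidAlgebra ℚ G :=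
  MonoidAlgebra.liftNCRingHom (MonoidAlgebra.singleOneRingHom.comp (Int.castRingHom ℚ))
    (MonoidAlgebra.of ℚ G) (fun r g => by
      show MonoidAlgebra.single 1 ((r : ℚ)) * MonoidAlgebra.single g 1 =
        MonoidAlgebra.single g 1 * MonoidAlgebra.single 1 ((r : ℚ))
      rw [MonoidAlgebra.single_mul_single, MonoidAlgebra.single_mul_single,
        one_mul, mul_one, one_mul, mul_one])

/-- The augmentation of an element of a group ring: the sum of its coefficients
(the image under the map sending every group element to `1`). -/
def augm {R : Type} [Semiring R] {G : Type} [Monoid G] (α : MonoidAlgebra R G) : R :=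
  Finsupp.sum α.coeff fun _ c => c

/-- The embedding `ℚ[C_p] → ℚ[Q₈ × C_p]` given by `τ ↦ (1, τ)`. -/
noncomputable def kapQ (p : ℕ) : MonoidAlgebra ℚ (Cp p) →+* MonoidAlgebra ℚ (Gp p) :=
  MonoidAlgebra.mapDomainRingHom ℚ (MonoidHom.inr Q8 (Cp p))

/-- The embedding `ℤ[C_p] → ℤ[Q₈ × C_p]` given by `τ ↦ (1, τ)`. -/
noncomputable def kapZ (p : ℕ) : MonoidAlgebra ℤ (Cp p) →+* MonoidAlgebra ℤ (Gp p) :=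
  MonoidAlgebra.mapDomainRingHom ℤ (MonoidHom.inr Q8 (Cp p))

/-- The composite embedding `ℤ[C_p] → ℚ[Q₈ × C_p]`. -/
noncomputable def kapZQ (p : ℕ) : MonoidAlgebra ℤ (Cp p) →+* MonoidAlgebra ℚ (Gp p) :=
  (iotaG (Gp p)).comp (kapZ p)

/-- `u = s + n` is the additive Jordan decomposition of `u` in the rational group algebra:
`s` is semisimple (its minimal polynomial over `ℚ` is squarefree, equivalently has no
repeated roots in the algebraic closure), `n` is nilpotent, and `s`, `n` commute. -/
def IsJordanDecomp {G : Type} [Monoid G] (u s n : MonoidAlgebra ℚ G) : Prop :=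
  u = s + n ∧ Squarefree (minpoly ℚ s) ∧ IsNilpotent n ∧ Commute s n

/-! Under `ρ`, the elements `±1` of `Q₈` go to `±I` and all other elements of `Q₈` to traceless
matrices, while `t` goes to the scalar `ε`. Hence `tr ρ(g) ∈ {0, ±2} · εᵏ` for every `g ∈ G`, and
`tr ρ(β)` for `β ∈ ℤ[G]` is an integral combination of these. -/

section GroupRing

variable {G : Type} [Monoid G]

theorem iotaG_single (g : G) (b : ℤ) : iotaG G (single g b) = single g (b : ℚ) := by
  simp [iotaG, singleOneRingHom, ← zsmul_eq_mul]

theorem map_iotaG_mem_of_forall {M : Type} [AddCommGroup M] (f : MonoidAlgebra ℚ G →+ M)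
    (A : AddSubgroup M) (hA : ∀ g, f (of ℚ G g) ∈ A) (β : MonoidAlgebra ℤ G) :
    f (iotaG G β) ∈ A := by
  induction β using MonoidAlgebra.induction_linear with
  | zero => simp
  | add β γ hβ hγ => simpa only [map_add] using A.add_mem hβ hγ
  | single g b =>
    have hsingle : single g (b : ℚ) = b • of ℚ G g := by simp [smul_single]
    rw [iotaG_single, hsingle, map_zsmul]
    exact A.zsmul_mem (hA g) b

end GroupRing

theorem MonoidHom.map_multiplicative_zmod_eq_pow {n : ℕ} [NeZero n] {M : Type} [Monoid M]
    (τ : Multiplicative (ZMod n) →* M) (x : Multiplicative (ZMod n)) :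
    τ x = τ (Multiplicative.ofAdd 1) ^ (Multiplicative.toAdd x).val := by
  rw [← map_pow, ← ofAdd_nsmul, nsmul_one, ZMod.natCast_zmod_val, ofAdd_toAdd]

section Matrices

variable {K : Type} [CommRing K]

theorem trace_Q8_eq_two_mul_int (σ : Q8 →* Matrix (Fin 2) (Fin 2) K) (r s : K)
    (ha : σ aQ = !![0, 1; -1, 0]) (hb : σ bQ = !![r, s; s, -r]) (q : Q8) :
    ∃ m : ℤ, (σ q).trace = 2 * m := by
  have hpow (k : ℕ) : QuaternionGroup.a (k : ZMod 4) = aQ ^ k :=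
    (QuaternionGroup.a_one_pow k).symm
  have hxa (k : ℕ) : QuaternionGroup.xa (k : ZMod 4) = bQ * aQ ^ k := by
    rw [← hpow, bQ, QuaternionGroup.xa_mul_a, zero_add]
  cases q with
  | a i =>
    obtain ⟨k, hk, rfl⟩ : ∃ k : ℕ, k < 4 ∧ (k : ZMod 4) = i :=
      ⟨i.val, ZMod.val_lt i, ZMod.natCast_zmod_val i⟩
    rw [hpow, map_pow, ha]
    interval_cases k
    · exact ⟨1, by simp⟩
    · exact ⟨0, by simp [Matrix.trace_fin_two]⟩
    · exact ⟨-1, by norm_num [pow_succ, Matrix.trace_fin_two]⟩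
    · exact ⟨0, by simp [pow_succ, Matrix.trace_fin_two]⟩
  | xa i =>
    obtain ⟨k, hk, rfl⟩ : ∃ k : ℕ, k < 4 ∧ (k : ZMod 4) = i :=
      ⟨i.val, ZMod.val_lt i, ZMod.natCast_zmod_val i⟩
    refine ⟨0, ?_⟩
    rw [hxa, map_mul, map_pow, hb, ha]
    interval_cases k <;> simp [pow_succ, Matrix.trace_fin_two]

def Subring.doubles (S : Subring K) : AddSubgroup K :=
  S.toAddSubgroup.map (AddMonoidHom.mulLeft 2)

theorem Subring.mem_doubles {S : Subring K} {x : K} : x ∈ S.doubles ↔ ∃ y ∈ S, x = 2 * y := by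
  simp [doubles, eq_comm]

theorem trace_of_mem_doubles {p : ℕ} [NeZero p] {ε r s : K}
    (ρ : MonoidAlgebra ℚ (Gp p) →+* Matrix (Fin 2) (Fin 2) K)
    (hρa : ρ (of ℚ (Gp p) (aQ, 1)) = !![0, 1; -1, 0])
    (hρb : ρ (of ℚ (Gp p) (bQ, 1)) = !![r, s; s, -r])
    (hρt : ρ (of ℚ (Gp p) (1, tC p)) = !![ε, 0; 0, ε]) (g : Gp p) :
    (ρ (of ℚ (Gp p) g)).trace ∈ (Algebra.adjoin ℤ {ε}).toSubring.doubles := by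
  let π : Gp p →* Matrix (Fin 2) (Fin 2) K := ρ.toMonoidHom.comp (of ℚ (Gp p))
  obtain ⟨m, hm⟩ : ∃ m : ℤ, (π (g.1, 1)).trace = 2 * m :=
    trace_Q8_eq_two_mul_int (π.comp (MonoidHom.inl _ _)) r s hρa hρb g.1
  have hscalar : π (1, Multiplicative.ofAdd 1) = ε • 1 := by
    refine hρt.trans ?_
    ext i j
    fin_cases i <;> fin_cases j <;> simp
  have hτ : π (1, g.2) = ε ^ (Multiplicative.toAdd g.2).val • 1 := by
    rw [← MonoidHom.inr_apply, ← MonoidHom.comp_apply, MonoidHom.map_multiplicative_zmod_eq_pow,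
      MonoidHom.comp_apply, MonoidHom.inr_apply, hscalar, smul_pow, one_pow]
  have hsplit : π g = π (g.1, 1) * π (1, g.2) := by rw [← map_mul, Prod.fst_mul_snd]
  rw [Subring.mem_doubles]
  refine ⟨m * ε ^ (Multiplicative.toAdd g.2).val, ?_, ?_⟩
  · exact mul_mem (intCast_mem _ m) (pow_mem (Algebra.self_mem_adjoin_singleton ℤ ε) _)
  · change (π g).trace = _
    rw [hsplit, hτ, Matrix.mul_smul, mul_one, Matrix.trace_smul, smul_eq_mul, hm]
    ring

end Matrices

theorem trace_rho_mem_two_int_eps_general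
    (p : ℕ) [hp : Fact p.Prime]
    (ε : CyclotomicField p ℚ)
    (r s : CyclotomicField p ℚ)
    (ρ : MonoidAlgebra ℚ (Gp p) →+* Matrix (Fin 2) (Fin 2) (CyclotomicField p ℚ))
    (hρa : ρ (MonoidAlgebra.of ℚ (Gp p) (aQ, 1)) = !![0, 1; -1, 0])
    (hρb : ρ (MonoidAlgebra.of ℚ (Gp p) (bQ, 1)) = !![r, s; s, -r])
    (hρt : ρ (MonoidAlgebra.of ℚ (Gp p) (1, tC p)) = !![ε, 0; 0, ε]) :
    ∀ β : MonoidAlgebra ℤ (Gp p),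
      ∃ y ∈ Algebra.adjoin ℤ {ε}, Matrix.trace (ρ (iotaG (Gp p) β)) = 2 * y := by
  intro β
  exact Subring.mem_doubles.mp <|
    map_iotaG_mem_of_forall ((Matrix.traceAddMonoidHom _ _).comp ρ.toAddMonoidHom) _
      (trace_of_mem_doubles ρ hρa hρb hρt) β

theorem trace_rho_mem_two_int_eps
    (p : ℕ) [hp : Fact p.Prime] (hp2 : p ≠ 2)
    (hord : Even (orderOf (2 : ZMod p)))
    (ε : CyclotomicField p ℚ) (hε : IsPrimitiveRoot ε p)
    (r s : CyclotomicField p ℚ)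
    (hr : r ∈ Algebra.adjoin ℤ {ε}) (hs : s ∈ Algebra.adjoin ℤ {ε})
    (hrs : r ^ 2 + s ^ 2 = -1)
    (ρ : MonoidAlgebra ℚ (Gp p) →+* Matrix (Fin 2) (Fin 2) (CyclotomicField p ℚ))
    (hρa : ρ (MonoidAlgebra.of ℚ (Gp p) (aQ, 1)) = !![0, 1; -1, 0])
    (hρb : ρ (MonoidAlgebra.of ℚ (Gp p) (bQ, 1)) = !![r, s; s, -r])
    (hρt : ρ (MonoidAlgebra.of ℚ (Gp p) (1, tC p)) = !![ε, 0; 0, ε]) :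
    ∀ β : MonoidAlgebra ℤ (Gp p),
      ∃ y ∈ Algebra.adjoin ℤ {ε}, Matrix.trace (ρ (iotaG (Gp p) β)) = 2 * y :=
  trace_rho_mem_two_int_eps_general p (hp := hp) ε r s ρ hρa hρb hρt
end

section
/- Let α = Σ_{g ∈ Q₈} α_g(t) g ∈ ℚ[G] with α_g(t) ∈ ℚ[C_p], and set ξ_g = α_g(ε) − α_{gz}(ε) for g ∈ {1, a, b, c}. Then ρ(α) is a nilpotent matrix if and only if ξ_1 = 0 and ξ_a² + ξ_b² + ξ_c² = 0. -/
open MonoidAlgebra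

/-!
Since `z = a²` is central and `ρ(a)² = -1`, we have `ρ(gz) = -ρ(g)`, so the terms of `α` pair up
and `ρ(α) = ξ₁ + ξₐ i + ξ_b j + ξ_c k` with `i = ρ(a)`, `j = ρ(b)`, `k = ij`: the coefficients
`ξ_g ∈ ℚ(ε)` are scalars because `t` acts as `ε`. A `2 × 2` matrix over a reduced ring is nilpotent iff
its trace and determinant vanish (Cayley–Hamilton), and here the trace is `2ξ₁` while, as
`r² + s² = -1` makes `i, j, k` quaternion units, the determinant is the norm
`ξ₁² + ξₐ² + ξ_b² + ξ_c²`.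
-/

theorem Matrix.isNilpotent_fin_two_iff {R : Type*} [CommRing R] [IsReduced R]
    (M : Matrix (Fin 2) (Fin 2) R) : IsNilpotent M ↔ M.trace = 0 ∧ M.det = 0 := by
  nontriviality R
  constructor
  · rintro ⟨k, hk⟩
    refine ⟨(isNilpotent_trace_of_isNilpotent ⟨k, hk⟩).eq_zero, IsNilpotent.eq_zero ⟨k, ?_⟩⟩
    rw [← Matrix.det_pow, hk, Matrix.det_zero]
  · rintro ⟨htr, hdet⟩
    refine ⟨2, ?_⟩
    simpa [Matrix.charpoly_fin_two, htr, hdet] using M.aeval_self_charpoly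

theorem Cp.ringHom_ext {A : Type*} [Semiring A] {p : ℕ} {f g : MonoidAlgebra ℚ (Cp p) →+* A}
    (h : f (of ℚ (Cp p) (tC p)) = g (of ℚ (Cp p) (tC p))) : f = g := by
  refine MonoidAlgebra.ringHom_ext (fun q => ?_) (fun x => ?_)
  · exact RingHom.congr_fun (RingHom.ext_rat (f.comp singleOneRingHom) (g.comp singleOneRingHom)) q
  · let φ : Multiplicative ℤ →* Cp p := (Int.castAddHom (ZMod p)).toMultiplicative
    have hφ : ((f : _ →* A).comp (of ℚ _)).comp φ = ((g : _ →* A).comp (of ℚ _)).comp φ :=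
      MonoidHom.ext_mint (by simpa [φ, tC] using h)
    obtain ⟨k, rfl⟩ : ∃ k : ℤ, φ (.ofAdd k) = x := ⟨x.toAdd.cast, ZMod.intCast_zmod_cast _⟩
    exact DFunLike.congr_fun hφ (.ofAdd k)

theorem Q8.sum_eq_sum_add_mul_zQ {M : Type*} [AddCommMonoid M] (F : Q8 → M) :
    ∑ g, F g = ∑ g ∈ {1, aQ, bQ, cQ}, (F g + F (g * zQ)) := by
  have huniv : (Finset.univ : Finset Q8) =
      {1, aQ, bQ, cQ} ∪ Finset.image (· * zQ) {1, aQ, bQ, cQ} := by decide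
  rw [huniv, Finset.sum_union (by decide), Finset.sum_image fun x _ y _ h => mul_right_cancel h,
    ← Finset.sum_add_distrib]

section
variable {K : Type*} [CommRing K]

def quaternionMatrix (r s x y u v : K) : Matrix (Fin 2) (Fin 2) K :=
  x • 1 + y • !![0, 1; -1, 0] + u • !![r, s; s, -r] + v • (!![0, 1; -1, 0] * !![r, s; s, -r])

theorem trace_quaternionMatrix (r s x y u v : K) :
    (quaternionMatrix r s x y u v).trace = 2 * x := by
  simp [quaternionMatrix, Matrix.trace_fin_two]
  ring

theorem det_quaternionMatrix {r s : K} (hrs : r ^ 2 + s ^ 2 = -1) (x y u v : K) :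
    (quaternionMatrix r s x y u v).det = x ^ 2 + y ^ 2 + u ^ 2 + v ^ 2 := by
  simp [quaternionMatrix, Matrix.det_fin_two]
  linear_combination (-(u ^ 2) - v ^ 2) * hrs

end

section
variable {p : ℕ} {K : Type*} [CommRing K]
  {ρ : MonoidAlgebra ℚ (Gp p) →+* Matrix (Fin 2) (Fin 2) K} {δf : MonoidAlgebra ℚ (Cp p) →+* K}

theorem map_kapQ_eq_scalar {ε : K} (hρt : ρ (of ℚ (Gp p) (1, tC p)) = !![ε, 0; 0, ε])
    (hδ : δf (of ℚ (Cp p) (tC p)) = ε) (τ : MonoidAlgebra ℚ (Cp p)) :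
    ρ (kapQ p τ) = Matrix.scalar (Fin 2) (δf τ) := by
  refine RingHom.congr_fun (Cp.ringHom_ext (f := ρ.comp (kapQ p))
    (g := (Matrix.scalar (Fin 2)).comp δf) ?_) τ
  have hkt : kapQ p (of ℚ (Cp p) (tC p)) = of ℚ (Gp p) (1, tC p) := by simp [kapQ]
  rw [RingHom.comp_apply, RingHom.comp_apply, hkt, hρt, hδ]
  ext i j
  fin_cases i <;> fin_cases j <;> simp

theorem map_of_mul_zQ (hρa : ρ (of ℚ (Gp p) (aQ, 1)) = !![0, 1; -1, 0]) (g : Q8) :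
    ρ (of ℚ (Gp p) (g * zQ, 1)) = -ρ (of ℚ (Gp p) (g, 1)) := by
  have hz : ((g * zQ, 1) : Gp p) = (g, 1) * (aQ, 1) * (aQ, 1) := by simp [zQ, mul_assoc]
  have hsq : !![0, 1; -1, 0] * !![0, 1; -1, 0] = (-1 : Matrix (Fin 2) (Fin 2) K) := by
    ext i j
    fin_cases i <;> fin_cases j <;> simp
  rw [hz, map_mul, map_mul, map_mul, map_mul, hρa, mul_assoc, hsq, mul_neg_one]

theorem map_sum_kapQ_mul_of {ε r s : K} (hρa : ρ (of ℚ (Gp p) (aQ, 1)) = !![0, 1; -1, 0])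
    (hρb : ρ (of ℚ (Gp p) (bQ, 1)) = !![r, s; s, -r])
    (hρt : ρ (of ℚ (Gp p) (1, tC p)) = !![ε, 0; 0, ε]) (hδ : δf (of ℚ (Cp p) (tC p)) = ε)
    (αf : Q8 → MonoidAlgebra ℚ (Cp p)) :
    ρ (∑ g : Q8, kapQ p (αf g) * of ℚ (Gp p) (g, 1)) =
      quaternionMatrix r s (δf (αf 1) - δf (αf (1 * zQ))) (δf (αf aQ) - δf (αf (aQ * zQ)))
        (δf (αf bQ) - δf (αf (bQ * zQ))) (δf (αf cQ) - δf (αf (cQ * zQ))) := by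
  have hpair (g : Q8) : ρ (kapQ p (αf g) * of ℚ (Gp p) (g, 1)) +
      ρ (kapQ p (αf (g * zQ)) * of ℚ (Gp p) (g * zQ, 1)) =
      (δf (αf g) - δf (αf (g * zQ))) • ρ (of ℚ (Gp p) (g, 1)) := by
    simp only [map_mul, map_kapQ_eq_scalar hρt hδ, map_of_mul_zQ hρa, Matrix.scalar_apply,
      ← Matrix.smul_eq_diagonal_mul, mul_neg]
    module
  have hc : ρ (of ℚ (Gp p) (cQ, 1)) = !![0, 1; -1, 0] * !![r, s; s, -r] := by
    rw [← hρa, ← hρb, ← map_mul, ← map_mul, Prod.mk_mul_mk, mul_one, cQ]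
  rw [map_sum, Q8.sum_eq_sum_add_mul_zQ, Finset.sum_insert (by decide),
    Finset.sum_insert (by decide), Finset.sum_insert (by decide), Finset.sum_singleton]
  simp only [hpair]
  simp only [hρa, hρb, hc, show ((1 : Q8), (1 : Cp p)) = 1 from rfl, map_one, quaternionMatrix,
    add_assoc]

end

theorem rho_nilpotent_iff_general
    (p : ℕ)
    (ε : CyclotomicField p ℚ)
    (r s : CyclotomicField p ℚ)
    (hrs : r ^ 2 + s ^ 2 = -1)
    (ρ : MonoidAlgebra ℚ (Gp p) →+* Matrix (Fin 2) (Fin 2) (CyclotomicField p ℚ))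
    (hρa : ρ (MonoidAlgebra.of ℚ (Gp p) (aQ, 1)) = !![0, 1; -1, 0])
    (hρb : ρ (MonoidAlgebra.of ℚ (Gp p) (bQ, 1)) = !![r, s; s, -r])
    (hρt : ρ (MonoidAlgebra.of ℚ (Gp p) (1, tC p)) = !![ε, 0; 0, ε])
    (δf : MonoidAlgebra ℚ (Cp p) →+* CyclotomicField p ℚ)
    (hδ : δf (MonoidAlgebra.of ℚ (Cp p) (tC p)) = ε)
    (αf : Q8 → MonoidAlgebra ℚ (Cp p)) (α : MonoidAlgebra ℚ (Gp p))
    (hα : α = ∑ g : Q8, kapQ p (αf g) * MonoidAlgebra.of ℚ (Gp p) (g, 1)) :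
    IsNilpotent (ρ α) ↔
      ((δf (αf 1) - δf (αf zQ) = 0) ∧
       (δf (αf aQ) - δf (αf (aQ * zQ))) ^ 2 + (δf (αf bQ) - δf (αf (bQ * zQ))) ^ 2 +
         (δf (αf cQ) - δf (αf (cQ * zQ))) ^ 2 = 0) := by
  rw [hα, map_sum_kapQ_mul_of hρa hρb hρt hδ, Matrix.isNilpotent_fin_two_iff,
    trace_quaternionMatrix, det_quaternionMatrix hrs, one_mul, mul_eq_zero,
    or_iff_right two_ne_zero]
  refine and_congr_right fun hx => ?_
  rw [hx, zero_pow two_ne_zero, zero_add]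

theorem rho_nilpotent_iff
    (p : ℕ) [hp : Fact p.Prime] (hp2 : p ≠ 2)
    (hord : Even (orderOf (2 : ZMod p)))
    (ε : CyclotomicField p ℚ) (hε : IsPrimitiveRoot ε p)
    (r s : CyclotomicField p ℚ)
    (hr : r ∈ Algebra.adjoin ℤ {ε}) (hs : s ∈ Algebra.adjoin ℤ {ε})
    (hrs : r ^ 2 + s ^ 2 = -1)
    (ρ : MonoidAlgebra ℚ (Gp p) →+* Matrix (Fin 2) (Fin 2) (CyclotomicField p ℚ))
    (hρa : ρ (MonoidAlgebra.of ℚ (Gp p) (aQ, 1)) = !![0, 1; -1, 0])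
    (hρb : ρ (MonoidAlgebra.of ℚ (Gp p) (bQ, 1)) = !![r, s; s, -r])
    (hρt : ρ (MonoidAlgebra.of ℚ (Gp p) (1, tC p)) = !![ε, 0; 0, ε])
    (δf : MonoidAlgebra ℚ (Cp p) →+* CyclotomicField p ℚ)
    (hδ : δf (MonoidAlgebra.of ℚ (Cp p) (tC p)) = ε)
    (αf : Q8 → MonoidAlgebra ℚ (Cp p)) (α : MonoidAlgebra ℚ (Gp p))
    (hα : α = ∑ g : Q8, kapQ p (αf g) * MonoidAlgebra.of ℚ (Gp p) (g, 1)) :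
    IsNilpotent (ρ α) ↔
      ((δf (αf 1) - δf (αf zQ) = 0) ∧
       (δf (αf aQ) - δf (αf (aQ * zQ))) ^ 2 + (δf (αf bQ) - δf (αf (bQ * zQ))) ^ 2 +
         (δf (αf cQ) - δf (αf (cQ * zQ))) ^ 2 = 0) :=
  rho_nilpotent_iff_general p ε r s hrs ρ hρa hρb hρt δf hδ αf α hα
end

section
/- Let α = Σ_{g ∈ Q₈} α_g(t) g ∈ ℚ[G] with α_g(t) ∈ ℚ[C_p]. Then α is nilpotent if and only if α = Σ_{g ∈ {a,b,c}} α_g(t) g (1 − z) with α_a(t)² + α_b(t)² + α_c(t)² = 0 in ℚ[C_p]. In this case α² = 0 and the augmentation α_g(1) = 0 for each g ∈ {a, b, c}. -/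
open MonoidAlgebra

/-!
Nilpotent elements of `ℚ[C_p]` vanish, since it is a commutative semisimple algebra. The four
linear characters of `Q₈` (the characters of `Q₈ / ⟨z⟩ ≅ C₂ × C₂`) and the quaternion
representation `a ↦ i`, `b ↦ j` extend to algebra maps from `ℚ[Q₈ × C_p]` to `ℚ[C_p]` and to
`ℍ(ℚ[C_p])`. A nilpotent `α` is killed by every linear character, which forces `α_{zg} = -α_g`,
and its quaternion image is a nilpotent quaternion, hence has zero real part and zero reduced
norm; this gives `α_1 = α_z = 0` and `α_a² + α_b² + α_c² = 0`. Conversely, writing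
`α = P (1 - z)`, the cross terms of `P²` come in pairs `g h + h g = g h (1 + z)` that are killed
by `1 - z`, so `α² = 2 P² (1 - z) = -2 (α_a² + α_b² + α_c²)(1 - z) = 0`.
-/

open scoped Quaternion

lemma pow_mul_mul_pow_eq_of_mul_mul_eq {M : Type*} [Monoid M] {x y : M} (hxy : x * y * x = y)
    (k : ℕ) : x ^ k * y * x ^ k = y := by
  induction k with
  | zero => simp
  | succ k ih =>
    nth_rewrite 1 [pow_succ]
    rw [pow_succ', show x ^ k * x * y * (x * x ^ k) = x ^ k * (x * y * x) * x ^ k by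
      simp only [mul_assoc], hxy, ih]

namespace ZMod

variable {m : ℕ} {M : Type*} [Monoid M] {x y : M}

lemma pow_val_add [NeZero m] (hx : x ^ m = 1) (i j : ZMod m) :
    x ^ (i + j).val = x ^ i.val * x ^ j.val := by
  rw [val_add, ← pow_eq_pow_mod _ hx, pow_add]

lemma pow_natCast_val (hx : x ^ m = 1) (k : ℕ) : x ^ (k : ZMod m).val = x ^ k := by
  rw [val_natCast, ← pow_eq_pow_mod _ hx]

lemma pow_val_mul_eq_mul_pow_val_neg [NeZero m] (hx : x ^ m = 1) (hxy : x * y * x = y)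
    (i : ZMod m) : x ^ i.val * y = y * x ^ (-i).val := by
  calc x ^ i.val * y = x ^ i.val * y * x ^ (i + -i).val := by simp
    _ = y * x ^ (-i).val := by
      rw [pow_val_add hx, ← mul_assoc, pow_mul_mul_pow_eq_of_mul_mul_eq hxy]

end ZMod

namespace QuaternionGroup

variable {n : ℕ} [NeZero n] {M : Type*} [Monoid M] {x y : M}

/-- The homomorphism with `a 1 ↦ x` and `xa 0 ↦ y`, for `x, y` satisfying the defining relations
`x^{2n} = 1`, `y⁻¹ x y = x⁻¹` (stated inverse-free as `x y x = y`) and `y² = xⁿ`. -/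
def lift (x y : M) (hx : x ^ (2 * n) = 1) (hxy : x * y * x = y) (hy : y * y = x ^ n) :
    QuaternionGroup n →* M where
  toFun
    | a i => x ^ i.val
    | xa i => y * x ^ i.val
  map_one' := by simp only [one_def, ZMod.val_zero, pow_zero]
  map_mul' := by
    rintro (i | i) (j | j)
    · simp only [a_mul_a, ZMod.pow_val_add hx]
    · simp only [a_mul_xa]
      rw [← mul_assoc, ZMod.pow_val_mul_eq_mul_pow_val_neg hx hxy, mul_assoc,
        ← ZMod.pow_val_add hx, sub_eq_neg_add]
    · simp only [xa_mul_a, ZMod.pow_val_add hx, mul_assoc]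
    · simp only [xa_mul_xa]
      rw [mul_assoc, ← mul_assoc (x ^ i.val), ZMod.pow_val_mul_eq_mul_pow_val_neg hx hxy,
        ← mul_assoc, ← mul_assoc, hy, ← ZMod.pow_natCast_val hx n, mul_assoc,
        ← ZMod.pow_val_add hx, ← ZMod.pow_val_add hx]
      ring_nf

@[simp] lemma lift_xa {hx hxy hy} (i : ZMod (2 * n)) :
    lift x y hx hxy hy (xa i) = y * x ^ i.val := rfl

end QuaternionGroup

namespace Quaternion

variable {S : Type*} [CommRing S]

def unitI : ℍ[S] := ⟨0, 1, 0, 0⟩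

def unitJ : ℍ[S] := ⟨0, 0, 1, 0⟩

@[simp] lemma unitI_re : (unitI : ℍ[S]).re = 0 := rfl
@[simp] lemma unitI_imI : (unitI : ℍ[S]).imI = 1 := rfl
@[simp] lemma unitI_imJ : (unitI : ℍ[S]).imJ = 0 := rfl
@[simp] lemma unitI_imK : (unitI : ℍ[S]).imK = 0 := rfl
@[simp] lemma unitJ_re : (unitJ : ℍ[S]).re = 0 := rfl
@[simp] lemma unitJ_imI : (unitJ : ℍ[S]).imI = 0 := rfl
@[simp] lemma unitJ_imJ : (unitJ : ℍ[S]).imJ = 1 := rfl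
@[simp] lemma unitJ_imK : (unitJ : ℍ[S]).imK = 0 := rfl

lemma unitI_mul_self : (unitI : ℍ[S]) * unitI = -1 := by ext <;> simp

lemma unitJ_mul_self : (unitJ : ℍ[S]) * unitJ = -1 := by ext <;> simp

lemma unitI_mul_unitJ_mul_unitI : (unitI : ℍ[S]) * unitJ * unitI = unitJ := by ext <;> simp

variable [IsReduced S] {q : ℍ[S]}

lemma normSq_eq_zero_of_isNilpotent (hq : IsNilpotent q) : normSq q = 0 :=
  (hq.map normSq).eq_zero

lemma re_eq_zero_of_isNilpotent (h2 : IsUnit (2 : S)) (hq : IsNilpotent q) : q.re = 0 := by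
  have hstar : IsNilpotent (star q) := by
    obtain ⟨n, hn⟩ := hq
    exact ⟨n, by rw [← star_pow, hn, star_zero]⟩
  have hcomm : Commute q (star q) := by
    rw [star_eq_two_re_sub]
    exact (coe_commute _ _).symm.sub_right (Commute.refl q)
  have hsum : q + star q = algebraMap S ℍ[S] (2 * q.re) := by
    rw [star_eq_two_re_sub]
    simp [algebraMap_def]
  have h2re : IsNilpotent (2 * q.re) := by
    have := hcomm.isNilpotent_add hq hstar
    rwa [hsum, IsNilpotent.map_iff coe_injective] at this
  exact h2.mul_right_eq_zero.mp h2re.eq_zero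

lemma imI_sq_add_imJ_sq_add_imK_sq_eq_zero_of_isNilpotent (h2 : IsUnit (2 : S))
    (hq : IsNilpotent q) : q.imI ^ 2 + q.imJ ^ 2 + q.imK ^ 2 = 0 := by
  have h := normSq_eq_zero_of_isNilpotent hq
  rw [normSq_def', re_eq_zero_of_isNilpotent h2 hq] at h
  linear_combination h

end Quaternion

/-- Inverting the character table of `C₂ × C₂`. -/
lemma eq_zero_of_forall_sign {S : Type*} [CommRing S] (h2 : IsUnit (2 : S)) {e₀ e₁ e₂ e₃ : S}
    (h : ∀ s t : S, s * s = 1 → t * t = 1 → e₀ + e₁ * s + e₂ * t + e₃ * (s * t) = 0) :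
    e₀ = 0 ∧ e₁ = 0 ∧ e₂ = 0 ∧ e₃ = 0 := by
  have h4 : IsUnit (4 : S) := by simpa [two_mul, ← two_add_two_eq_four] using h2.mul h2
  have E₁ := h 1 1 (one_mul 1) (one_mul 1)
  have E₂ := h (-1) 1 (by simp) (one_mul 1)
  have E₃ := h 1 (-1) (one_mul 1) (by simp)
  have E₄ := h (-1) (-1) (by simp) (by simp)
  refine ⟨?_, ?_, ?_, ?_⟩ <;> refine h4.mul_right_eq_zero.mp ?_
  · linear_combination E₁ + E₂ + E₃ + E₄
  · linear_combination E₁ - E₂ + E₃ - E₄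
  · linear_combination E₁ + E₂ - E₃ - E₄
  · linear_combination E₁ - E₂ - E₃ + E₄

namespace MonoidAlgebra

variable {R K H A : Type*} [CommSemiring R] [Monoid K] [CommMonoid H] [Semiring A]
  [Algebra R[H] A] [Algebra R A]

noncomputable def liftProd (ρ : K →* A) : R[K × H] →ₐ[R] A :=
  lift R A (K × H) (ρ.noncommCoprod ((algebraMap R[H] A : R[H] →* A).comp (of R H))
    fun _ _ => by exact Algebra.commute_algebraMap_right _ _)

lemma liftProd_mapDomain_inr [IsScalarTower R R[H] A] (ρ : K →* A) (β : R[H]) :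
    liftProd ρ (mapDomain (MonoidHom.inr K H) β) = algebraMap R[H] A β := by
  induction β using induction_linear with
  | zero => simp
  | add β γ hβ hγ => rw [mapDomain_add, map_add, map_add, hβ, hγ]
  | single h r =>
    rw [mapDomain_single, liftProd, lift_single]
    change r • (ρ 1 * algebraMap R[H] A (of R H h)) = _
    rw [map_one, one_mul, ← smul_of, Algebra.smul_def, Algebra.smul_def, map_mul,
      ← IsScalarTower.algebraMap_apply]

lemma liftProd_of_inl (ρ : K →* A) (g : K) :
    liftProd (H := H) ρ (of R (K × H) (g, 1)) = ρ g := by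
  rw [liftProd, lift_of]
  change ρ g * algebraMap R[H] A (of R H 1) = ρ g
  rw [map_one, map_one, mul_one]

end MonoidAlgebra

namespace Q8

lemma zQ_commute (g : Q8) : Commute zQ g := by
  revert g
  unfold Commute SemiconjBy
  decide

lemma sum_univ_eq_pairs {M : Type*} [AddCommMonoid M] (F : Q8 → M) :
    ∑ g, F g =
      F 1 + F zQ + (F aQ + F (zQ * aQ)) + (F bQ + F (zQ * bQ)) + (F cQ + F (zQ * cQ)) := by
  rw [show (Finset.univ : Finset Q8) = {1, zQ, aQ, zQ * aQ, bQ, zQ * bQ, cQ, zQ * cQ} by decide]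
  simp +decide only [Finset.sum_insert, Finset.sum_singleton, Finset.mem_insert,
    Finset.mem_singleton]
  abel

section Representations

variable {M : Type*} [CommMonoid M] {s t : M} {hs : s * s = 1} {ht : t * t = 1}

variable (s t hs ht) in
def signChar : Q8 →* M :=
  QuaternionGroup.lift s t (by rw [pow_mul, sq s, hs, one_pow])
    (by rw [mul_right_comm, hs, one_mul]) (by rw [ht, sq, hs])

@[simp] lemma signChar_aQ : signChar s t hs ht aQ = s := pow_one s

@[simp] lemma signChar_bQ : signChar s t hs ht bQ = t := by simp [signChar, bQ]

@[simp] lemma signChar_zQ : signChar s t hs ht zQ = 1 := by rw [zQ, map_mul, signChar_aQ, hs]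

variable (S : Type*) [CommRing S]

open Quaternion in
def toQuaternion : Q8 →* ℍ[S] :=
  QuaternionGroup.lift unitI unitJ (by rw [pow_mul, sq unitI, unitI_mul_self]; norm_num)
    unitI_mul_unitJ_mul_unitI (by rw [sq, unitI_mul_self, unitJ_mul_self])

variable {S}

@[simp] lemma toQuaternion_aQ : toQuaternion S aQ = Quaternion.unitI := pow_one _

@[simp] lemma toQuaternion_bQ : toQuaternion S bQ = Quaternion.unitJ := by
  simp [toQuaternion, bQ]

@[simp] lemma toQuaternion_zQ : toQuaternion S zQ = -1 := by
  rw [zQ, map_mul, toQuaternion_aQ, Quaternion.unitI_mul_self]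

end Representations

section GroupAlgebra

variable {R H : Type*} [CommRing R] [CommMonoid H]

noncomputable abbrev inclCoeff : R[H] →+* R[Q8 × H] := mapDomainRingHom R (MonoidHom.inr Q8 H)

noncomputable def ofCoeffs (f : Q8 → R[H]) : R[Q8 × H] :=
  ∑ g : Q8, inclCoeff (f g) * of R (Q8 × H) (g, 1)

/-- Under `R[Q₈](1 - z) ≅ ℍ[R]` this is the pure quaternion `x i + y j + w k`, up to a factor. -/
noncomputable def pureImag (x y w : R[H]) : R[Q8 × H] :=
  inclCoeff x * of R (Q8 × H) (aQ, 1) * (1 - of R (Q8 × H) (zQ, 1)) +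
    inclCoeff y * of R (Q8 × H) (bQ, 1) * (1 - of R (Q8 × H) (zQ, 1)) +
    inclCoeff w * of R (Q8 × H) (cQ, 1) * (1 - of R (Q8 × H) (zQ, 1))

lemma inclCoeff_commute (x : R[H]) (y : R[Q8 × H]) : Commute (inclCoeff x) y := by
  induction x using induction_linear with
  | zero => simp
  | add x x' hx hx' => rw [map_add]; exact hx.add_left hx'
  | single h r =>
    rw [mapDomainRingHom_apply, mapDomain_single]
    exact single_commute (fun _ => .prod (.one_left _) (.all _ _)) (fun _ => .all _ _) y

lemma of_zQ_commute (y : R[Q8 × H]) : Commute (of R (Q8 × H) (zQ, 1)) y :=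
  of_commute (fun m => .prod (zQ_commute m.1) (.one_left _)) y

lemma of_mul_of (g h : Q8) :
    of R (Q8 × H) (g, 1) * of R (Q8 × H) (h, 1) = of R (Q8 × H) (g * h, 1) := by
  rw [← map_mul, Prod.mk_mul_mk, one_mul]

lemma inclCoeff_mul_of_mul_inclCoeff_mul_of (u v : R[H]) (g h : Q8) :
    inclCoeff u * of R (Q8 × H) (g, 1) * (inclCoeff v * of R (Q8 × H) (h, 1)) =
      inclCoeff (u * v) * of R (Q8 × H) (g * h, 1) := by
  rw [map_mul, ← of_mul_of, mul_assoc, ← mul_assoc (of R _ _), ← (inclCoeff_commute v _).eq]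
  simp only [mul_assoc]

lemma of_zQ_mul_self : of R (Q8 × H) (zQ, 1) * of R (Q8 × H) (zQ, 1) = 1 := by
  rw [of_mul_of, show zQ * zQ = 1 by decide, ← Prod.one_eq_mk, map_one]

lemma of_zQ_mul_one_sub_of_zQ :
    of R (Q8 × H) (zQ, 1) * (1 - of R (Q8 × H) (zQ, 1)) = -(1 - of R (Q8 × H) (zQ, 1)) := by
  rw [mul_sub, mul_one, of_zQ_mul_self, neg_sub]

lemma one_sub_of_zQ_mul_self :
    (1 - of R (Q8 × H) (zQ, 1)) * (1 - of R (Q8 × H) (zQ, 1)) =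
      2 * (1 - of R (Q8 × H) (zQ, 1)) := by
  rw [sub_mul, one_mul, of_zQ_mul_one_sub_of_zQ, sub_neg_eq_add, two_mul]

lemma pureImag_sq {x y w : R[H]} (h : x ^ 2 + y ^ 2 + w ^ 2 = 0) : pureImag x y w ^ 2 = 0 := by
  set W : R[Q8 × H] := 1 - of R (Q8 × H) (zQ, 1) with hW
  set P := inclCoeff x * of R (Q8 × H) (aQ, 1) + inclCoeff y * of R (Q8 × H) (bQ, 1) +
    inclCoeff w * of R (Q8 × H) (cQ, 1)
  have hPW : pureImag x y w = P * W := by simp only [pureImag, P, W, add_mul]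
  have hWP : Commute W P := (Commute.one_left P).sub_left (of_zQ_commute P)
  have hww : w * w = -(x * x) - y * y := by linear_combination h
  have hPPW : P * P * W = 0 := by
    have hzW : of R (Q8 × H) (zQ, 1) * W = -W := of_zQ_mul_one_sub_of_zQ
    simp only [P, add_mul, mul_add, inclCoeff_mul_of_mul_inclCoeff_mul_of]
    simp only [show aQ * aQ = zQ from rfl, show aQ * bQ = cQ from rfl,
      show bQ * aQ = cQ * zQ by decide, show aQ * cQ = bQ * zQ by decide,
      show cQ * aQ = bQ by decide, show bQ * bQ = zQ by decide, show bQ * cQ = aQ by decide,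
      show cQ * bQ = aQ * zQ by decide, show cQ * cQ = zQ by decide, ← of_mul_of, mul_assoc, hzW,
      mul_neg, mul_comm y x, mul_comm w x, mul_comm w y, hww, map_sub, map_neg, sub_mul, neg_mul]
    abel
  calc pureImag x y w ^ 2 = P * P * (W * W) := by
        rw [hPW, sq, mul_assoc, ← mul_assoc W, hWP.eq]
        simp only [mul_assoc]
    _ = 2 * (P * P * W) := by
        rw [hW, one_sub_of_zQ_mul_self, ← hW, ← mul_assoc, ← (Commute.ofNat_left 2 _).eq,
          mul_assoc]
    _ = 0 := by rw [hPPW, mul_zero]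

variable {f : Q8 → R[H]}

lemma ofCoeffs_eq_pureImag (h1 : f 1 = 0) (hz : f zQ = 0) (ha : f (zQ * aQ) = -f aQ)
    (hb : f (zQ * bQ) = -f bQ) (hc : f (zQ * cQ) = -f cQ) :
    ofCoeffs f = pureImag (f aQ) (f bQ) (f cQ) := by
  simp only [ofCoeffs, pureImag, sum_univ_eq_pairs, h1, hz, ha, hb, hc, map_zero, zero_mul,
    zero_add, map_neg]
  simp only [(zQ_commute _).eq, ← of_mul_of, sub_eq_add_neg, mul_add, mul_neg, neg_mul,
    mul_one, mul_assoc]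

lemma liftProd_ofCoeffs {A : Type*} [Semiring A] [Algebra R[H] A] [Algebra R A]
    [IsScalarTower R R[H] A] (ρ : Q8 →* A) (f : Q8 → R[H]) :
    liftProd ρ (ofCoeffs f) = ∑ g, algebraMap R[H] A (f g) * ρ g := by
  simp only [ofCoeffs, map_sum, map_mul, mapDomainRingHom_apply, liftProd_mapDomain_inr,
    liftProd_of_inl]

lemma liftProd_signChar_ofCoeffs {s t : R[H]} (hs : s * s = 1) (ht : t * t = 1) :
    liftProd (signChar s t hs ht) (ofCoeffs f) =
      (f 1 + f zQ) + (f aQ + f (zQ * aQ)) * s + (f bQ + f (zQ * bQ)) * t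
        + (f cQ + f (zQ * cQ)) * (s * t) := by
  rw [liftProd_ofCoeffs, sum_univ_eq_pairs]
  simp only [Algebra.algebraMap_self, RingHom.id_apply, map_mul, signChar_zQ, map_one,
    signChar_aQ, signChar_bQ, cQ]
  ring

lemma liftProd_toQuaternion_ofCoeffs :
    liftProd (toQuaternion R[H]) (ofCoeffs f) =
      ⟨f 1 - f zQ, f aQ - f (zQ * aQ), f bQ - f (zQ * bQ), f cQ - f (zQ * cQ)⟩ := by
  rw [liftProd_ofCoeffs, sum_univ_eq_pairs]
  simp only [map_mul, toQuaternion_zQ, map_one, toQuaternion_aQ, toQuaternion_bQ, cQ]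
  ext <;> simp <;> ring

variable [IsReduced R[H]]

lemma add_zQ_mul_eq_zero_of_isNilpotent (h2 : IsUnit (2 : R[H])) (hf : IsNilpotent (ofCoeffs f)) :
    f 1 + f zQ = 0 ∧ f aQ + f (zQ * aQ) = 0 ∧ f bQ + f (zQ * bQ) = 0 ∧
      f cQ + f (zQ * cQ) = 0 :=
  eq_zero_of_forall_sign h2 fun _ _ hs ht => by
    rw [← liftProd_signChar_ofCoeffs hs ht]
    exact (hf.map _).eq_zero

lemma sub_zQ_mul_of_isNilpotent (h2 : IsUnit (2 : R[H])) (hf : IsNilpotent (ofCoeffs f)) :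
    f 1 - f zQ = 0 ∧
      (f aQ - f (zQ * aQ)) ^ 2 + (f bQ - f (zQ * bQ)) ^ 2 + (f cQ - f (zQ * cQ)) ^ 2 = 0 := by
  have hq : IsNilpotent (liftProd (R := R) (toQuaternion R[H]) (ofCoeffs f)) := hf.map _
  rw [liftProd_toQuaternion_ofCoeffs] at hq
  have hre := Quaternion.re_eq_zero_of_isNilpotent h2 hq
  have him := Quaternion.imI_sq_add_imJ_sq_add_imK_sq_eq_zero_of_isNilpotent h2 hq
  dsimp only at hre him
  exact ⟨hre, him⟩

lemma isNilpotent_ofCoeffs_iff (h2 : IsUnit (2 : R)) :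
    IsNilpotent (ofCoeffs f) ↔
      ofCoeffs f = pureImag (f aQ) (f bQ) (f cQ) ∧ f aQ ^ 2 + f bQ ^ 2 + f cQ ^ 2 = 0 := by
  refine ⟨fun hf => ?_, fun ⟨hform, hsum⟩ => ⟨2, hform ▸ pureImag_sq hsum⟩⟩
  have h2' : IsUnit (2 : R[H]) := by simpa only [map_ofNat] using h2.map (algebraMap R R[H])
  obtain ⟨h1, ha, hb, hc⟩ := add_zQ_mul_eq_zero_of_isNilpotent h2' hf
  obtain ⟨hre, him⟩ := sub_zQ_mul_of_isNilpotent h2' hf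
  have hf1 : f 1 = 0 := h2'.mul_right_eq_zero.mp (by linear_combination hre + h1)
  have hsum : f aQ ^ 2 + f bQ ^ 2 + f cQ ^ 2 = 0 :=
    (h2'.mul h2').mul_right_eq_zero.mp (by
      linear_combination him + (3 * f aQ - f (zQ * aQ)) * ha + (3 * f bQ - f (zQ * bQ)) * hb
        + (3 * f cQ - f (zQ * cQ)) * hc)
  exact ⟨ofCoeffs_eq_pureImag hf1 (by linear_combination h1 - hf1) (by linear_combination ha)
    (by linear_combination hb) (by linear_combination hc), hsum⟩

end GroupAlgebra

end Q8

lemma augm_eq_lift {R G : Type} [CommSemiring R] [Monoid G] (x : R[G]) :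
    augm x = lift R R G 1 x := by
  rw [lift_apply, augm]
  exact Finsupp.sum_congr fun _ _ => by simp

lemma augm_eq_zero_of_sq_add_sq_add_sq_eq_zero {R G : Type} [CommRing R] [LinearOrder R]
    [IsStrictOrderedRing R] [Monoid G] {x y w : R[G]} (h : x ^ 2 + y ^ 2 + w ^ 2 = 0) :
    augm x = 0 ∧ augm y = 0 ∧ augm w = 0 := by
  have h' := congrArg (lift R R G 1) h
  simp only [map_add, map_pow, map_zero, ← augm_eq_lift] at h'
  obtain ⟨hxy, hw⟩ := (add_eq_zero_iff_of_nonneg (by positivity) (by positivity)).mp h'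
  obtain ⟨hx, hy⟩ := (add_eq_zero_iff_of_nonneg (by positivity) (by positivity)).mp hxy
  exact ⟨pow_eq_zero_iff two_ne_zero |>.mp hx, pow_eq_zero_iff two_ne_zero |>.mp hy,
    pow_eq_zero_iff two_ne_zero |>.mp hw⟩

theorem nilpotent_iff_in_QG_general
    (p : ℕ) [Fact p.Prime]
    (αf : Q8 → MonoidAlgebra ℚ (Cp p)) (α : MonoidAlgebra ℚ (Gp p))
    (hα : α = ∑ g : Q8, kapQ p (αf g) * MonoidAlgebra.of ℚ (Gp p) (g, 1)) :
    (IsNilpotent α ↔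
      (α = kapQ p (αf aQ) * MonoidAlgebra.of ℚ (Gp p) (aQ, 1) *
              (1 - MonoidAlgebra.of ℚ (Gp p) (zQ, 1)) +
           kapQ p (αf bQ) * MonoidAlgebra.of ℚ (Gp p) (bQ, 1) *
              (1 - MonoidAlgebra.of ℚ (Gp p) (zQ, 1)) +
           kapQ p (αf cQ) * MonoidAlgebra.of ℚ (Gp p) (cQ, 1) *
              (1 - MonoidAlgebra.of ℚ (Gp p) (zQ, 1)) ∧
       (αf aQ) ^ 2 + (αf bQ) ^ 2 + (αf cQ) ^ 2 = 0)) ∧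
    (IsNilpotent α →
      α ^ 2 = 0 ∧ augm (αf aQ) = 0 ∧ augm (αf bQ) = 0 ∧ augm (αf cQ) = 0) := by
  have : NeZero (Nat.card (Cp p) : ℚ) := ⟨by simp [(Fact.out : p.Prime).ne_zero]⟩
  have key : IsNilpotent α ↔ α = Q8.pureImag (αf aQ) (αf bQ) (αf cQ) ∧
      αf aQ ^ 2 + αf bQ ^ 2 + αf cQ ^ 2 = 0 := hα ▸ Q8.isNilpotent_ofCoeffs_iff (by norm_num)
  refine ⟨key, fun hnil => ?_⟩
  obtain ⟨hform, hsum⟩ := key.mp hnil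
  exact ⟨hform ▸ Q8.pureImag_sq hsum, augm_eq_zero_of_sq_add_sq_add_sq_eq_zero hsum⟩

theorem nilpotent_iff_in_QG
    (p : ℕ) [Fact p.Prime] (hp2 : p ≠ 2)
    (hord : Even (orderOf (2 : ZMod p)))
    (αf : Q8 → MonoidAlgebra ℚ (Cp p)) (α : MonoidAlgebra ℚ (Gp p))
    (hα : α = ∑ g : Q8, kapQ p (αf g) * MonoidAlgebra.of ℚ (Gp p) (g, 1)) :
    (IsNilpotent α ↔
      (α = kapQ p (αf aQ) * MonoidAlgebra.of ℚ (Gp p) (aQ, 1) *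
              (1 - MonoidAlgebra.of ℚ (Gp p) (zQ, 1)) +
           kapQ p (αf bQ) * MonoidAlgebra.of ℚ (Gp p) (bQ, 1) *
              (1 - MonoidAlgebra.of ℚ (Gp p) (zQ, 1)) +
           kapQ p (αf cQ) * MonoidAlgebra.of ℚ (Gp p) (cQ, 1) *
              (1 - MonoidAlgebra.of ℚ (Gp p) (zQ, 1)) ∧
       (αf aQ) ^ 2 + (αf bQ) ^ 2 + (αf cQ) ^ 2 = 0)) ∧
    (IsNilpotent α →
      α ^ 2 = 0 ∧ augm (αf aQ) = 0 ∧ augm (αf bQ) = 0 ∧ augm (αf cQ) = 0) :=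
  nilpotent_iff_in_QG_general p αf α hα
end

section
/- Let p be an odd prime whose multiplicative order of 2 modulo p equals 2m with m odd. If α, β, γ ∈ ℤ[C_p] are *-invariant elements satisfying α² + β² + γ² ≡ 0 (mod 4), then α ≡ β ≡ γ ≡ 0 (mod 2). -/
open MonoidAlgebra

/-- The involution `*` of `ℤ[C_p]`, induced by `g ↦ g⁻¹` on group elements. -/
def starC (p : ℕ) : MonoidAlgebra ℤ (Cp p) → MonoidAlgebra ℤ (Cp p) :=
  fun x => MonoidAlgebra.ofCoeff (Finsupp.equivMapDomain (Equiv.inv (Cp p)) x.coeff)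


/-!
Reduce modulo 2 into `𝔽₂[C_p]`, which is reduced by Maschke's theorem since `p` is odd.
Because `2 ^ m ≡ -1 (mod p)`, the `m`-th iterate of Frobenius on `𝔽₂[C_p]` is the involution `*`,
so the reductions `a, b` of `α, β` satisfy `x ^ 2 ^ m = x`. In characteristic 2,
`(a + b + c) ^ 2 = a ^ 2 + b ^ 2 + c ^ 2 = 0` forces `c = a + b`; substituting this back into the
congruence mod 4 and dividing by 2 gives `a ^ 2 + a b + b ^ 2 = 0`, so `a / b` would be a primitive
cube root of unity. That is excluded because `2 ^ m ≡ 2 (mod 3)` for odd `m`: concretely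
`a ^ 3 = b ^ 3` and the fixed-point equations give `a b ^ 2 = a ^ 2 b`, whence `a ^ 3 = 0`.
-/

instance MonoidAlgebra.charP {R M : Type*} [CommRing R] [Monoid M] (q : ℕ) [CharP R q] :
    CharP (MonoidAlgebra R M) q :=
  charP_of_injective_algebraMap' R q

theorem pow_eq_neg_one_of_orderOf_eq_two_mul {R : Type*} [CommRing R] [NoZeroDivisors R]
    {x : R} {m : ℕ} (hm : m ≠ 0) (h : orderOf x = 2 * m) : x ^ m = -1 :=
  ((h ▸ IsPrimitiveRoot.orderOf x).pow (by omega) (mul_comm 2 m)).eq_neg_one_of_two_right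

theorem Nat.two_pow_mod_three_of_odd {m : ℕ} (hm : Odd m) : 2 ^ m % 3 = 2 := by
  obtain ⟨j, rfl⟩ := hm
  rw [pow_succ, pow_mul, Nat.mul_mod, Nat.pow_mod]
  norm_num

namespace MonoidAlgebra

section IntegralMonoidAlgebra

variable {M : Type*} [Monoid M]

theorem coeff_natCast_mul (n : ℕ) (x : MonoidAlgebra ℤ M) (g : M) :
    ((n : MonoidAlgebra ℤ M) * x).coeff g = n * x.coeff g := by
  rw [← nsmul_eq_mul, coeff_smul]
  simp

theorem mapRingHom_intCast_eq_zero_iff (n : ℕ) (x : MonoidAlgebra ℤ M) :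
    mapRingHom M (Int.castRingHom (ZMod n)) x = 0 ↔ (n : MonoidAlgebra ℤ M) ∣ x := by
  constructor
  · intro h
    have hdvd (g : M) : (n : ℤ) ∣ x.coeff g := by
      simpa [ZMod.intCast_zmod_eq_zero_iff_dvd] using congr_arg (·.coeff g) h
    refine ⟨ofCoeff (Finsupp.mapRange (· / (n : ℤ)) (Int.zero_ediv _) x.coeff), ?_⟩
    ext g
    simp [coeff_natCast_mul, Int.mul_ediv_cancel' (hdvd g)]
  · rintro ⟨d, rfl⟩
    simp

theorem dvd_of_natCast_mul_dvd_natCast_mul {n : ℕ} (hn : n ≠ 0) {a x : MonoidAlgebra ℤ M}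
    (h : (n : MonoidAlgebra ℤ M) * a ∣ n * x) : a ∣ x := by
  obtain ⟨d, hd⟩ := h
  refine ⟨d, smul_right_injective _ (Int.natCast_ne_zero.2 hn) ?_⟩
  simp only [natCast_zsmul, nsmul_eq_mul, hd, mul_assoc]

end IntegralMonoidAlgebra

theorem pow_prime_pow_eq_mapDomainRingHom {q : ℕ} [Fact q.Prime] {G : Type*} [CommMonoid G]
    (n : ℕ) (x : MonoidAlgebra (ZMod q) G) :
    x ^ q ^ n = mapDomainRingHom (ZMod q) (powMonoidHom (q ^ n)) x := by
  have : ExpChar (MonoidAlgebra (ZMod q) G) q := .prime Fact.out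
  rw [← iterateFrobenius_def]
  congr 1
  refine ringHom_ext (fun r => ?_) (fun g => ?_) <;>
    simp [iterateFrobenius_def, single_pow, ZMod.pow_card_pow]

end MonoidAlgebra

theorem powMonoidHom_eq_invMonoidHom {p k : ℕ} (hk : (k : ZMod p) = -1) :
    (powMonoidHom k : Cp p →* Cp p) = invMonoidHom := by
  ext g
  apply Multiplicative.toAdd.injective
  simp [nsmul_eq_mul, hk]

theorem starC_eq_mapDomainRingHom (p : ℕ) (x : MonoidAlgebra ℤ (Cp p)) :
    starC p x = mapDomainRingHom ℤ invMonoidHom x := by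
  ext g
  simpa [starC] using (Finsupp.mapDomain_apply inv_injective x.coeff g⁻¹).symm

theorem mapRingHom_zmod_two_pow_two_pow_of_starC_eq_self {p m : ℕ}
    (h2m : (2 : ZMod p) ^ m = -1) {x : MonoidAlgebra ℤ (Cp p)} (hx : starC p x = x) :
    mapRingHom (Cp p) (Int.castRingHom (ZMod 2)) x ^ 2 ^ m =
      mapRingHom (Cp p) (Int.castRingHom (ZMod 2)) x := by
  rw [pow_prime_pow_eq_mapDomainRingHom,
    powMonoidHom_eq_invMonoidHom (by push_cast; exact h2m),
    ← RingHom.comp_apply, ← mapRingHom_comp_mapDomainRingHom, RingHom.comp_apply,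
    ← starC_eq_mapDomainRingHom, hx]

section CharTwo

variable {R : Type*} [CommRing R] [IsReduced R] [CharP R 2]

theorem add_add_eq_zero_of_sq_add_sq_add_sq_eq_zero {a b c : R}
    (h : a ^ 2 + b ^ 2 + c ^ 2 = 0) : a + b + c = 0 :=
  IsNilpotent.eq_zero ⟨2, by rwa [CharTwo.add_sq, CharTwo.add_sq]⟩

theorem eq_zero_of_sq_add_mul_add_sq_eq_zero {a b : R} {n : ℕ} (hn : n % 3 = 2) (ha : a ^ n = a)
    (hb : b ^ n = b) (h : a ^ 2 + a * b + b ^ 2 = 0) : a = 0 ∧ b = 0 := by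
  have h2 : (2 : R) = 0 := CharTwo.two_eq_zero
  obtain ⟨k, rfl⟩ : ∃ k, n = 3 * k + 2 := ⟨n / 3, by omega⟩
  have hcube : a ^ 3 = b ^ 3 := by
    linear_combination (a + b) * h - (a ^ 2 * b + a * b ^ 2 + b ^ 3) * h2
  have hab : a * b ^ 2 = a ^ 2 * b :=
    calc a * b ^ 2 = a ^ (3 * k + 2) * b ^ 2 := by rw [ha]
      _ = a ^ 2 * b ^ (3 * k + 2) := by rw [pow_add, pow_mul, hcube, ← pow_mul]; ring
      _ = a ^ 2 * b := by rw [hb]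
  have ha0 : a = 0 := IsNilpotent.eq_zero ⟨3, by linear_combination a * h - hab - a ^ 2 * b * h2⟩
  exact ⟨ha0, IsNilpotent.eq_zero ⟨2, by simpa [ha0] using h⟩⟩

end CharTwo

theorem star_invariant_sum_of_squares_mod_four_general
    (p m : ℕ) [Fact p.Prime] (hp2 : p ≠ 2)
    (hord : orderOf (2 : ZMod p) = 2 * m) (hm : Odd m)
    (α β γ : MonoidAlgebra ℤ (Cp p))
    (hα : starC p α = α) (hβ : starC p β = β)
    (hsum : ∃ d : MonoidAlgebra ℤ (Cp p), α ^ 2 + β ^ 2 + γ ^ 2 = 4 * d) :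
    (∃ d : MonoidAlgebra ℤ (Cp p), α = 2 * d) ∧
    (∃ d : MonoidAlgebra ℤ (Cp p), β = 2 * d) ∧
    (∃ d : MonoidAlgebra ℤ (Cp p), γ = 2 * d) := by
  set red := mapRingHom (Cp p) (Int.castRingHom (ZMod 2))
  have hred (x : MonoidAlgebra ℤ (Cp p)) : red x = 0 ↔ 2 ∣ x := by
    simpa using mapRingHom_intCast_eq_zero_iff 2 x
  have : NeZero (Nat.card (Cp p) : ZMod 2) := ⟨by
    simpa [ZMod.natCast_eq_zero_iff, Nat.prime_dvd_prime_iff_eq Nat.prime_two Fact.out]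
      using Ne.symm hp2⟩
  have h2m : (2 : ZMod p) ^ m = -1 := pow_eq_neg_one_of_orderOf_eq_two_mul hm.pos.ne' hord
  have habc : red α + red β + red γ = 0 := by
    apply add_add_eq_zero_of_sq_add_sq_add_sq_eq_zero
    simpa using (hred _).2 (dvd_trans ⟨2, by norm_num⟩ hsum)
  obtain ⟨δ, hδ⟩ := (hred (α + β + γ)).1 (by simpa using habc)
  have hw : 2 ∣ α ^ 2 + α * β + β ^ 2 := by
    obtain ⟨d, hd⟩ := hsum
    -- `γ = 2δ - α - β` turns `α² + β² + γ²` into `2(α² + αβ + β²) + 4(δ² - δ(α + β))`.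
    refine dvd_of_natCast_mul_dvd_natCast_mul two_ne_zero ⟨d - δ ^ 2 + δ * (α + β), ?_⟩
    linear_combination hd + (α + β - γ - 2 * δ) * hδ
  obtain ⟨ha, hb⟩ : red α = 0 ∧ red β = 0 :=
    eq_zero_of_sq_add_mul_add_sq_eq_zero (Nat.two_pow_mod_three_of_odd hm)
    (mapRingHom_zmod_two_pow_two_pow_of_starC_eq_self h2m hα)
    (mapRingHom_zmod_two_pow_two_pow_of_starC_eq_self h2m hβ) (by simpa using (hred _).2 hw)
  exact ⟨(hred α).1 ha, (hred β).1 hb, (hred γ).1 (by simpa [ha, hb] using habc)⟩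

theorem star_invariant_sum_of_squares_mod_four
    (p m : ℕ) [Fact p.Prime] (hp2 : p ≠ 2)
    (hord : orderOf (2 : ZMod p) = 2 * m) (hm : Odd m)
    (α β γ : MonoidAlgebra ℤ (Cp p))
    (hα : starC p α = α) (hβ : starC p β = β) (hγ : starC p γ = γ)
    (hsum : ∃ d : MonoidAlgebra ℤ (Cp p), α ^ 2 + β ^ 2 + γ ^ 2 = 4 * d) :
    (∃ d : MonoidAlgebra ℤ (Cp p), α = 2 * d) ∧
    (∃ d : MonoidAlgebra ℤ (Cp p), β = 2 * d) ∧
    (∃ d : MonoidAlgebra ℤ (Cp p), γ = 2 * d) :=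
  star_invariant_sum_of_squares_mod_four_general p m hp2 hord hm α β γ hα hβ hsum
end

section
/- Let p be an odd prime. For every unit w of augmentation 1 in ℤ[C_p], the product N(w) = ∏_{i=1}^{p−1} φ_i(w) equals 1, where φ_i is the ring automorphism of ℤ[C_p] sending t to t^i. -/
open MonoidAlgebra

/-- The ring homomorphism `φᵢ` of `ℤ[C_p]` determined by `t ↦ t^i`. -/
noncomputable def phiC (p i : ℕ) : MonoidAlgebra ℤ (Cp p) →+* MonoidAlgebra ℤ (Cp p) :=
  MonoidAlgebra.mapDomainRingHom ℤ (powMonoidHom i : Cp p →* Cp p)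

/-!
The automorphisms `φ_i` depend only on `i mod p` and compose like the units of `ZMod p`, so
`N(w) = ∏_u φ_u(w)` is fixed by every `φ_u`, and so is its inverse. Since the `φ_u` permute the
nontrivial elements of `C_p` transitively, a fixed element has the form `a + b σ` with
`σ = ∑_g g`. As `σ² = p σ`, the coefficient `a` is multiplicative on such elements, so `a = ±1`
for the unit `N(w)`. Augmentation gives `a + b p = 1`, and `p` odd excludes `a = -1`; hence
`b = 0` and `N(w) = 1`.
-/

open Finset

section Augmentation

variable {R G : Type} [CommSemiring R] [Monoid G]

variable (R G) in
noncomputable def augmHom : MonoidAlgebra R G →+* R := (lift R R G 1).toRingHom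

lemma augmHom_apply (x : MonoidAlgebra R G) : augmHom R G x = augm x := by
  simp [augmHom, lift_apply, augm]

lemma augm_mapDomainRingHom {H : Type} [Monoid H] (f : G →* H) (x : MonoidAlgebra R G) :
    augm (mapDomainRingHom R f x) = augm x :=
  Finsupp.sum_mapDomain_index (fun _ => rfl) fun _ _ _ => rfl

end Augmentation

section GroupSum

variable (R G : Type) [CommRing R] [Fintype G]

noncomputable def groupSum : MonoidAlgebra R G := ∑ g : G, single g 1

variable {R G}

@[simp]
lemma coeff_groupSum (g : G) : (groupSum R G).coeff g = 1 := by
  classical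
  simp [groupSum, Finsupp.single_apply]

variable [Group G]

lemma single_one_mul_groupSum (g : G) : single g (1 : R) * groupSum R G = groupSum R G := by
  simp only [groupSum, mul_sum, single_mul_single, mul_one]
  exact Fintype.sum_equiv (Equiv.mulLeft g) _ _ fun _ => rfl

lemma groupSum_mul_groupSum : groupSum R G * groupSum R G = Fintype.card G • groupSum R G := by
  conv_lhs => arg 1; rw [groupSum]
  simp [sum_mul, single_one_mul_groupSum]

lemma smul_one_add_smul_groupSum_mul (a b c d : R) :
    (a • 1 + b • groupSum R G) * (c • 1 + d • groupSum R G) =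
      (a * c) • 1 + (a * d + b * c + b * d * Fintype.card G) • groupSum R G := by
  simp only [mul_add, add_mul, smul_mul_smul_comm, one_mul, mul_one, groupSum_mul_groupSum]
  module

lemma smul_one_add_smul_groupSum_eq_one_iff [Nontrivial G] {a b : R} :
    a • (1 : MonoidAlgebra R G) + b • groupSum R G = 1 ↔ a = 1 ∧ b = 0 := by
  refine ⟨fun h => ?_, fun ⟨ha, hb⟩ => by simp [ha, hb]⟩
  obtain ⟨g, hg⟩ := exists_ne (1 : G)
  have hb : b = 0 := by
    simpa [one_def, Finsupp.single_apply, hg.symm] using congrArg (·.coeff g) h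
  have hab : a + b = 1 := by simpa [one_def] using congrArg (·.coeff 1) h
  exact ⟨by simpa [hb] using hab, hb⟩

lemma exists_eq_smul_one_add_smul_groupSum {X : MonoidAlgebra R G} {c : R}
    (h : ∀ g ≠ 1, X.coeff g = c) : ∃ a b : R, X = a • 1 + b • groupSum R G := by
  refine ⟨X.coeff 1 - c, c, ?_⟩
  ext g
  by_cases hg : g = 1
  · simp [hg, one_def]
  · simp [h g hg, one_def, Ne.symm hg]

lemma augm_smul_one_add_smul_groupSum (a b : R) :
    augm (a • (1 : MonoidAlgebra R G) + b • groupSum R G) = a + b * Fintype.card G := by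
  simp [← augmHom_apply, groupSum, augmHom]

end GroupSum

lemma apply_prod_apply_eq_self {Γ A : Type*} [Group Γ] [Fintype Γ] [CommSemiring A]
    (Φ : Γ →* (A →+* A)) (x : A) (γ : Γ) : Φ γ (∏ δ, Φ δ x) = ∏ δ, Φ δ x := by
  simp only [map_prod, ← RingHom.comp_apply, ← RingHom.mul_def, ← map_mul]
  exact Fintype.prod_equiv (Equiv.mulLeft γ) _ _ fun _ => rfl

lemma RingHom.map_eq_self_of_mul_eq_one {A : Type*} [CommSemiring A] (ψ : A →+* A) {x y : A}
    (hx : ψ x = x) (hxy : x * y = 1) : ψ y = y :=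
  calc ψ y = ψ (y * x) * y := by rw [map_mul, hx, mul_assoc, hxy, mul_one]
    _ = y := by rw [mul_comm y, hxy, map_one, one_mul]

lemma Int.eq_zero_of_isUnit_of_add_mul_eq_one {p : ℕ} (hp : p.Prime) (hp2 : p ≠ 2) {a b : ℤ}
    (ha : IsUnit a) (h : a + b * p = 1) : b = 0 := by
  rcases Int.isUnit_iff.mp ha with rfl | rfl
  · simpa [hp.ne_zero] using h
  · have : (p : ℤ) ∣ 2 := ⟨b, by linarith⟩
    exact absurd ((Nat.prime_dvd_prime_iff_eq hp Nat.prime_two).mp (by exact_mod_cast this)) hp2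

section Cp

lemma pow_eq_pow_of_natCast_eq {p i j : ℕ} (h : (i : ZMod p) = j) (g : Cp p) : g ^ i = g ^ j := by
  show Multiplicative.ofAdd (i • g.toAdd) = Multiplicative.ofAdd (j • g.toAdd)
  rw [nsmul_eq_mul, nsmul_eq_mul, h]

lemma phiC_eq_of_natCast_eq {p i j : ℕ} (h : (i : ZMod p) = j) : phiC p i = phiC p j := by
  rw [phiC, phiC]
  exact congrArg _ (MonoidHom.ext (pow_eq_pow_of_natCast_eq h))

lemma phiC_mul (p i j : ℕ) : phiC p (i * j) = phiC p i * phiC p j := by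
  rw [RingHom.mul_def, phiC, phiC, phiC, ← mapDomainRingHom_comp]
  exact congrArg _ (MonoidHom.ext fun g => pow_mul' g i j)

lemma phiC_one (p : ℕ) : phiC p 1 = 1 := by
  have hid : (powMonoidHom 1 : Cp p →* Cp p) = MonoidHom.id _ := MonoidHom.ext pow_one
  rw [phiC, hid, mapDomainRingHom_id]
  rfl

variable {p : ℕ} [NeZero p]

variable (p) in
noncomputable def phiUnits : (ZMod p)ˣ →* (MonoidAlgebra ℤ (Cp p) →+* MonoidAlgebra ℤ (Cp p)) where
  toFun u := phiC p (u : ZMod p).val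
  map_one' := by rw [← phiC_one p]; exact phiC_eq_of_natCast_eq (by simp)
  map_mul' u v := by rw [← phiC_mul]; exact phiC_eq_of_natCast_eq (by simp)

lemma phiUnits_apply (u : (ZMod p)ˣ) : phiUnits p u = phiC p (u : ZMod p).val := rfl

lemma tC_pow_val (k : ZMod p) : tC p ^ k.val = Multiplicative.ofAdd k := by
  show Multiplicative.ofAdd (k.val • 1) = _
  rw [nsmul_eq_mul, mul_one, ZMod.natCast_zmod_val]

lemma pow_val_injective (u : (ZMod p)ˣ) : Function.Injective fun g : Cp p => g ^ (u : ZMod p).val :=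
  Function.LeftInverse.injective (g := fun g => g ^ ((u⁻¹ : (ZMod p)ˣ) : ZMod p).val) fun g => by
    have h : (((u : ZMod p).val * ((u⁻¹ : (ZMod p)ˣ) : ZMod p).val : ℕ) : ZMod p) = (1 : ℕ) := by
      rw [Nat.cast_mul, ZMod.natCast_zmod_val, ZMod.natCast_zmod_val, Units.mul_inv, Nat.cast_one]
    dsimp only
    rw [← pow_mul, pow_eq_pow_of_natCast_eq h g, pow_one]

variable [Fact p.Prime]

lemma prod_Icc_natCast_eq_prod_units {M : Type*} [CommMonoid M] (f : ZMod p → M) :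
    ∏ i ∈ Icc 1 (p - 1), f i = ∏ u : (ZMod p)ˣ, f u := by
  have hp := (Fact.out : p.Prime).one_lt
  refine prod_bij' (fun i hi => Units.mk0 (i : ZMod p) ?_) (fun u _ => (u : ZMod p).val)
    (fun _ _ => mem_univ _) (fun u _ => ?_) (fun i hi => ?_) (fun u _ => ?_) (fun _ _ => rfl)
  · rw [mem_Icc] at hi
    rw [Ne, ZMod.natCast_eq_zero_iff]
    exact Nat.not_dvd_of_pos_of_lt (by omega) (by omega)
  · have := ZMod.val_lt (u : ZMod p)
    have := (ZMod.val_ne_zero _).mpr u.ne_zero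
    rw [mem_Icc]
    omega
  · rw [mem_Icc] at hi
    simp [ZMod.val_cast_of_lt (show i < p by omega)]
  · exact Units.ext (ZMod.natCast_zmod_val _)

lemma prod_Icc_phiC_eq_prod_phiUnits (x : MonoidAlgebra ℤ (Cp p)) :
    ∏ i ∈ Icc 1 (p - 1), phiC p i x = ∏ u, phiUnits p u x :=
  calc ∏ i ∈ Icc 1 (p - 1), phiC p i x = ∏ i ∈ Icc 1 (p - 1), phiC p (i : ZMod p).val x :=
        prod_congr rfl fun i _ => by rw [phiC_eq_of_natCast_eq (ZMod.natCast_zmod_val _)]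
    _ = ∏ u, phiUnits p u x := prod_Icc_natCast_eq_prod_units fun k => phiC p k.val x

lemma coeff_eq_coeff_tC_of_forall_phiUnits_eq {X : MonoidAlgebra ℤ (Cp p)}
    (hX : ∀ u, phiUnits p u X = X) (g : Cp p) (hg : g ≠ 1) : X.coeff g = X.coeff (tC p) := by
  let u := Units.mk0 g.toAdd (toAdd_eq_zero.not.mpr hg)
  calc X.coeff g = (phiUnits p u X).coeff (tC p ^ (u : ZMod p).val) := by
        rw [hX, tC_pow_val]; rfl
    _ = X.coeff (tC p) := Finsupp.mapDomain_apply (pow_val_injective u) _ _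

lemma eq_one_of_isUnit_of_forall_phiUnits_eq (hp2 : p ≠ 2) {X : MonoidAlgebra ℤ (Cp p)}
    (hX : IsUnit X) (hfix : ∀ u, phiUnits p u X = X) (haug : augm X = 1) : X = 1 := by
  obtain ⟨Y, hXY⟩ := hX.exists_right_inv
  have hYfix u : phiUnits p u Y = Y := (phiUnits p u).map_eq_self_of_mul_eq_one (hfix u) hXY
  obtain ⟨c, d, rfl⟩ :=
    exists_eq_smul_one_add_smul_groupSum (coeff_eq_coeff_tC_of_forall_phiUnits_eq hYfix)
  obtain ⟨a, b, rfl⟩ :=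
    exists_eq_smul_one_add_smul_groupSum (coeff_eq_coeff_tC_of_forall_phiUnits_eq hfix)
  rw [smul_one_add_smul_groupSum_mul, smul_one_add_smul_groupSum_eq_one_iff] at hXY
  rw [augm_smul_one_add_smul_groupSum, Fintype.card_multiplicative, ZMod.card] at haug
  have hb := Int.eq_zero_of_isUnit_of_add_mul_eq_one Fact.out hp2
    (IsUnit.of_mul_eq_one _ hXY.1) haug
  rw [smul_one_add_smul_groupSum_eq_one_iff]
  exact ⟨by simpa [hb] using haug, hb⟩

end Cp

theorem norm_of_augmentation_one_unit_eq_one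
    (p : ℕ) [Fact p.Prime] (hp2 : p ≠ 2)
    (w : (MonoidAlgebra ℤ (Cp p))ˣ)
    (hw : augm (w : MonoidAlgebra ℤ (Cp p)) = 1) :
    ∏ i ∈ Finset.Icc 1 (p - 1), phiC p i (w : MonoidAlgebra ℤ (Cp p)) = 1 := by
  rw [prod_Icc_phiC_eq_prod_phiUnits]
  refine eq_one_of_isUnit_of_forall_phiUnits_eq hp2 ?_ (apply_prod_apply_eq_self _ _) ?_
  · exact IsUnit.prod_univ_iff.mpr fun u => w.isUnit.map (phiUnits p u)
  · rw [← augmHom_apply, map_prod]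
    simp only [augmHom_apply, phiUnits_apply, phiC, augm_mapDomainRingHom, hw, prod_const_one]
end

section
/- Let p be an odd prime. For every w ∈ 𝒰₂(ℤ[C_p]) = { v ∈ 𝒰₁(ℤ[C_p]) : v ≡ 1 mod (t−1)² }, the half-norm ∏_{i=1}^{(p−1)/2} φ_i(w) equals 1, where φ_i is the ring automorphism of ℤ[C_p] sending t to t^i. -/
open MonoidAlgebra

/-!
Write `v` for the half-norm of `w` and `ψ_η : ℤ[C_p] → R` for the evaluation `t ↦ η` at a `p`-th
root of unity `η`. Since `(ψ_1, ψ_ζ)` embeds `ℤ[C_p]` into `ℤ × ℚ(ζ)` and `ψ_1 v = 1`, it suffices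
to show `x := ψ_ζ v = 1`. The automorphism `φ_{p-1}` induces complex conjugation, and the indices
`i` and `p - i` for `1 ≤ i ≤ (p-1)/2` exhaust `1, …, p-1`, so `x x̄ = N(ψ_ζ w)`: a unit of `ℤ` that
is positive, hence `1`. Thus every conjugate of `x` has absolute value `1`, and by Kronecker's
theorem `x` is a root of unity with `x ≡ 1 mod (ζ - 1)²`. If `x ≠ 1`, some power `y` of `x` has
prime order `q`; then `ζ - 1 ∣ y - 1 ∣ q` forces `q = p`, so `y - 1` is associated to `ζ - 1`,
which is incompatible with `(ζ - 1)² ∣ y - 1`.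
-/

open Polynomial NumberField ComplexConjugate

theorem dvd_prod_sub_one {R ι : Type*} [CommRing R] {d : R} {s : Finset ι} {f : ι → R}
    (h : ∀ i ∈ s, d ∣ f i - 1) : d ∣ ∏ i ∈ s, f i - 1 := by
  refine Finset.prod_induction f (fun x => d ∣ x - 1) (fun a b ha hb => ?_) (by simp) h
  rw [show a * b - 1 = a * (b - 1) + (a - 1) by ring]
  exact (dvd_mul_of_dvd_right hb a).add ha

namespace CpGroupRing

variable {p : ℕ}

section Evaluation

variable [NeZero p] {R S : Type*} [CommRing R] [CommRing S]

def rootChar (η : R) (hη : η ^ p = 1) : Cp p →* R where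
  toFun g := η ^ (Multiplicative.toAdd g).val
  map_one' := by simp
  map_mul' a b := by
    rw [toAdd_mul, ZMod.val_add, ← pow_eq_pow_mod _ hη, pow_add]

theorem rootChar_apply (η : R) (hη : η ^ p = 1) (g : Cp p) :
    rootChar η hη g = η ^ (Multiplicative.toAdd g).val :=
  rfl

noncomputable def rootEval (η : R) (hη : η ^ p = 1) : MonoidAlgebra ℤ (Cp p) →+* R :=
  (MonoidAlgebra.lift ℤ R (Cp p) (rootChar η hη)).toRingHom

theorem rootEval_single (η : R) (hη : η ^ p = 1) (g : Cp p) (r : ℤ) :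
    rootEval η hη (MonoidAlgebra.single g r) = r * η ^ (Multiplicative.toAdd g).val := by
  simp [rootEval, rootChar]

theorem rootEval_of_tC (η : R) (hη : η ^ p = 1) :
    rootEval η hη (MonoidAlgebra.of ℤ (Cp p) (tC p)) = η := by
  rw [MonoidAlgebra.of_apply, rootEval_single, Int.cast_one, one_mul, tC, toAdd_ofAdd,
    ZMod.val_one_eq_one_mod, ← pow_eq_pow_mod _ hη, pow_one]

theorem comp_rootEval (F : R →+* S) (η : R) (hη : η ^ p = 1) :
    F.comp (rootEval η hη) = rootEval (F η) (by rw [← map_pow, hη, map_one]) := by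
  ext <;> simp [rootEval_single]

theorem rootEval_single_one (η : R) (hη : η ^ p = 1) (g : Cp p) :
    rootEval η hη (MonoidAlgebra.single g 1) = rootChar η hη g := by
  simp [rootEval]

theorem rootEval_comp_phiC (η : R) (hη : η ^ p = 1) (i : ℕ) :
    (rootEval η hη).comp (phiC p i) =
      rootEval (η ^ i) (by rw [← pow_mul, mul_comm, pow_mul, hη, one_pow]) := by
  refine MonoidAlgebra.ringHom_ext (fun r => by simp [phiC, rootEval_single]) fun g => ?_
  simp only [RingHom.comp_apply, phiC, MonoidAlgebra.mapDomainRingHom_apply,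
    MonoidAlgebra.mapDomain_single, powMonoidHom_apply, rootEval_single_one, map_pow]
  exact pow_right_comm η _ i

theorem intCast_augm (α : MonoidAlgebra ℤ (Cp p)) :
    (augm α : R) = rootEval (1 : R) (one_pow p) α := by
  simp [rootEval, MonoidAlgebra.lift_apply, augm, rootChar]

theorem augm_eq_rootEval_one (α : MonoidAlgebra ℤ (Cp p)) :
    augm α = rootEval (1 : ℤ) (one_pow p) α := by
  simpa using intCast_augm (R := ℤ) α

theorem augm_phiC (i : ℕ) (α : MonoidAlgebra ℤ (Cp p)) : augm (phiC p i α) = augm α := by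
  rw [augm_eq_rootEval_one, ← RingHom.comp_apply, rootEval_comp_phiC]
  simp only [one_pow, ← augm_eq_rootEval_one]

theorem augm_prod_phiC {α : MonoidAlgebra ℤ (Cp p)} (hα : augm α = 1) (s : Finset ℕ) :
    augm (∏ i ∈ s, phiC p i α) = 1 := by
  rw [augm_eq_rootEval_one, map_prod]
  exact Finset.prod_eq_one fun i _ => by rw [← augm_eq_rootEval_one, augm_phiC, hα]

end Evaluation

section Automorphisms

theorem phiC_comp_phiC (i j : ℕ) : (phiC p i).comp (phiC p j) = phiC p (j * i) :=
  MonoidAlgebra.ringHom_ext (fun r => by simp [phiC]) fun g => by simp [phiC, pow_mul]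

theorem phiC_eq_of_natCast_eq {i j : ℕ} (h : (i : ZMod p) = j) : phiC p i = phiC p j := by
  rw [phiC, phiC]
  congr 1
  refine MonoidHom.ext fun g => ?_
  change Multiplicative.ofAdd (i • Multiplicative.toAdd g) =
    Multiplicative.ofAdd (j • Multiplicative.toAdd g)
  rw [nsmul_eq_mul, nsmul_eq_mul, h]

theorem phiC_neg_one_phiC {i : ℕ} (hi : i ≤ p) (α : MonoidAlgebra ℤ (Cp p)) :
    phiC p (p - 1) (phiC p i α) = phiC p (p - i) α := by
  rw [← RingHom.comp_apply, phiC_comp_phiC]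
  congr 1
  apply phiC_eq_of_natCast_eq
  rcases Nat.eq_zero_or_pos p with rfl | hp
  · simp_all
  · push_cast [Nat.cast_sub hi, Nat.cast_sub hp]
    simp

theorem prod_phiC_mul_phiC_prod {h : ℕ} (hp : p = 2 * h + 1) (α : MonoidAlgebra ℤ (Cp p)) :
    (∏ i ∈ Finset.Icc 1 h, phiC p i α) * phiC p (p - 1) (∏ i ∈ Finset.Icc 1 h, phiC p i α) =
      ∏ i ∈ Finset.Ico 1 p, phiC p i α := by
  rw [map_prod, ← Finset.Ico_add_one_right_eq_Icc,
    Finset.prod_congr rfl fun i hi => phiC_neg_one_phiC (by simp at hi; omega) α,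
    Finset.prod_Ico_reflect (fun i => phiC p i α) _ (by omega),
    show p + 1 - (h + 1) = h + 1 by omega, Nat.add_sub_cancel,
    Finset.prod_Ico_consecutive _ (by omega) (by omega)]

theorem sq_sub_one_dvd_phiC_sub_one {α : MonoidAlgebra ℤ (Cp p)}
    (h : (MonoidAlgebra.of ℤ (Cp p) (tC p) - 1) ^ 2 ∣ α - 1) (i : ℕ) :
    (MonoidAlgebra.of ℤ (Cp p) (tC p) - 1) ^ 2 ∣ phiC p i α - 1 := by
  have ht : phiC p i (MonoidAlgebra.of ℤ (Cp p) (tC p)) = MonoidAlgebra.of ℤ (Cp p) (tC p) ^ i := by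
    simp [phiC]
  have := map_dvd (phiC p i) h
  simp only [map_pow, map_sub, map_one, ht] at this
  exact (pow_dvd_pow_of_dvd (sub_one_dvd_pow_sub_one _ i) 2).trans this

end Automorphisms

section Injectivity

variable [NeZero p]

noncomputable def toPoly (α : MonoidAlgebra ℤ (Cp p)) : ℚ[X] :=
  ∑ g : Cp p, C (α.coeff g : ℚ) * X ^ (Multiplicative.toAdd g).val

theorem aeval_toPoly {R : Type*} [CommRing R] [Algebra ℚ R] (η : R) (hη : η ^ p = 1)
    (α : MonoidAlgebra ℤ (Cp p)) : aeval η (toPoly α) = rootEval η hη α := by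
  simp [toPoly, rootEval, MonoidAlgebra.lift_apply, Finsupp.sum_fintype, rootChar_apply]

theorem coeff_toPoly (α : MonoidAlgebra ℤ (Cp p)) (g : Cp p) :
    (toPoly α).coeff (Multiplicative.toAdd g).val = α.coeff g := by
  simp [toPoly, (ZMod.val_injective p).eq_iff]

theorem degree_toPoly_lt (α : MonoidAlgebra ℤ (Cp p)) : (toPoly α).degree < p := by
  refine (degree_sum_le _ _).trans_lt ((Finset.sup_lt_iff (WithBot.bot_lt_coe p)).2 fun g _ => ?_)
  exact (degree_C_mul_X_pow_le _ _).trans_lt (WithBot.coe_lt_coe.2 (ZMod.val_lt _))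

theorem eq_of_augm_eq_of_rootEval_eq [hp : Fact p.Prime] {K : Type*} [Field K] [CharZero K]
    {ζ : K} (hζ : IsPrimitiveRoot ζ p) {α β : MonoidAlgebra ℤ (Cp p)} (h1 : augm α = augm β)
    (hζαβ : rootEval ζ hζ.pow_eq_one α = rootEval ζ hζ.pow_eq_one β) : α = β := by
  have hX : X - 1 ∣ toPoly (α - β) := by
    rw [← C_1, dvd_iff_isRoot, IsRoot, ← coe_aeval_eq_eval, aeval_toPoly (1 : ℚ) (one_pow p),
      map_sub, ← intCast_augm, ← intCast_augm, h1, sub_self]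
  have hΦ : cyclotomic p ℚ ∣ toPoly (α - β) := by
    rw [cyclotomic_eq_minpoly_rat hζ hp.out.pos]
    exact minpoly.dvd ℚ ζ (by rw [aeval_toPoly ζ hζ.pow_eq_one, map_sub, hζαβ, sub_self])
  have hcop : IsCoprime (cyclotomic p ℚ) (X - 1) := by
    refine ((Irreducible.coprime_iff_not_dvd (irreducible_X_sub_C 1)).2 fun hdvd => ?_).symm
    rw [dvd_iff_isRoot, IsRoot, eval_one_cyclotomic_prime] at hdvd
    exact hp.out.ne_zero (by exact_mod_cast hdvd)
  have h0 : toPoly (α - β) = 0 := by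
    refine eq_zero_of_dvd_of_degree_lt (hcop.mul_dvd hΦ hX) ?_
    rw [cyclotomic_prime_mul_X_sub_one, ← C_1, degree_X_pow_sub_C hp.out.pos]
    exact degree_toPoly_lt _
  rw [← sub_eq_zero]
  ext g
  have h := coeff_toPoly (α - β) g
  rw [h0, Polynomial.coeff_zero, eq_comm, Int.cast_eq_zero] at h
  rw [h, MonoidAlgebra.coeff_zero, Finsupp.coe_zero, Pi.zero_apply]

end Injectivity

theorem conj_rootEval [NeZero p] {η : ℂ} (hη : η ^ p = 1) (α : MonoidAlgebra ℤ (Cp p)) :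
    conj (rootEval η hη α) = rootEval η hη (phiC p (p - 1) α) := by
  have hconj : conj η = η ^ (p - 1) := by
    rw [← Complex.inv_eq_conj (Complex.norm_eq_one_of_pow_eq_one hη (NeZero.ne p))]
    refine (eq_inv_of_mul_eq_one_left ?_).symm
    rw [← pow_succ, Nat.sub_add_cancel NeZero.one_le, hη]
  rw [← RingHom.comp_apply, comp_rootEval, ← RingHom.comp_apply, rootEval_comp_phiC]
  congr 2

theorem algebraMap_rootEval_toInteger [NeZero p] {K : Type*} [Field K] {ζ : K}
    (hζ : IsPrimitiveRoot ζ p) (α : MonoidAlgebra ℤ (Cp p)) :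
    algebraMap (𝓞 K) K (rootEval hζ.toInteger hζ.toInteger_isPrimitiveRoot.pow_eq_one α) =
      rootEval ζ hζ.pow_eq_one α :=
  RingHom.congr_fun (comp_rootEval (algebraMap (𝓞 K) K) _ _) α

section CyclotomicField

variable [hp : Fact p.Prime] {K : Type*} [Field K] [NumberField K] [IsCyclotomicExtension {p} ℚ K]
  {ζ : K} (hζ : IsPrimitiveRoot ζ p)
include hζ

theorem eq_one_of_pow_eq_one_of_sq_dvd_sub_one {x : 𝓞 K} {n : ℕ} (hn : n ≠ 0) (hx : x ^ n = 1)
    (hdvd : (hζ.toInteger - 1) ^ 2 ∣ x - 1) : x = 1 := by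
  by_contra hx1
  have hN0 : orderOf x ≠ 0 :=
    (orderOf_pos_iff.2 (isOfFinOrder_iff_pow_eq_one.2 ⟨n, Nat.pos_of_ne_zero hn, hx⟩)).ne'
  have hq : (orderOf x).minFac.Prime := Nat.minFac_prime (by rwa [Ne, orderOf_eq_one_iff])
  set y := x ^ (orderOf x / (orderOf x).minFac)
  have hy : IsPrimitiveRoot y (orderOf x).minFac :=
    orderOf_pow_orderOf_div hN0 (Nat.minFac_dvd _) ▸ IsPrimitiveRoot.orderOf y
  have hy_dvd : (hζ.toInteger - 1) ^ 2 ∣ y - 1 := hdvd.trans (sub_one_dvd_pow_sub_one x _)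
  have hpq : p = (orderOf x).minFac := by
    have hq_dvd : hζ.toInteger - 1 ∣ ((orderOf x).minFac : ℤ) := by
      refine (dvd_pow_self _ two_ne_zero).trans (hy_dvd.trans ?_)
      exact_mod_cast sub_one_dvd_natCast_of_pow_eq_one hy.pow_eq_one (hy.ne_one hq.one_lt)
    rw [IsCyclotomicExtension.Rat.zeta_sub_one_dvd_intCast_iff' p hζ, Int.natCast_dvd_natCast,
      Nat.prime_dvd_prime_iff_eq hp.out hq] at hq_dvd
    exact hq_dvd
  rw [← hpq] at hy
  have hy' : IsPrimitiveRoot (y : K) p := hy.map_of_injective RingOfIntegers.coe_injective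
  obtain ⟨u, hu⟩ := IsCyclotomicExtension.Rat.associated_sub_one_of_isPrimitiveRoot p hζ hy'
  change (hζ.toInteger - 1) * u = y - 1 at hu
  rw [← hu, pow_two, mul_dvd_mul_iff_left hζ.zeta_sub_one_prime'.ne_zero] at hy_dvd
  exact hζ.zeta_sub_one_prime'.not_isUnit (isUnit_of_dvd_unit hy_dvd u.isUnit)

theorem rootEval_prod_phiC_eq_algebraMap_norm (α : MonoidAlgebra ℤ (Cp p)) :
    rootEval ζ hζ.pow_eq_one (∏ i ∈ Finset.Ico 1 p, phiC p i α) =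
      algebraMap ℚ K (Algebra.norm ℚ (rootEval ζ hζ.pow_eq_one α)) := by
  have := IsCyclotomicExtension.isGalois {p} ℚ K
  let e : Gal(K/ℚ) → ℕ := fun σ => (hζ.autToPow ℚ σ : ZMod p).val
  have he_mem : ∀ σ ∈ Finset.univ, e σ ∈ Finset.Ico 1 p := fun σ _ => by
    simp only [Finset.mem_Ico, e]
    exact ⟨Nat.one_le_iff_ne_zero.2 ((ZMod.val_ne_zero _).2 (Units.ne_zero _)), ZMod.val_lt _⟩
  have he_inj : Function.Injective e := fun σ τ h =>
    hζ.autToPow_injective ℚ (Units.ext (ZMod.val_injective p h))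
  have hcard : (Finset.Ico 1 p).card ≤ (Finset.univ : Finset Gal(K/ℚ)).card := by
    rw [Finset.card_univ, ← Nat.card_eq_fintype_card, IsGalois.card_aut_eq_finrank,
      IsCyclotomicExtension.finrank K (cyclotomic.irreducible_rat hp.out.pos),
      Nat.totient_prime hp.out, Nat.card_Ico]
  rw [Algebra.norm_eq_prod_automorphisms, map_prod]
  symm
  refine Finset.prod_bij (fun σ _ => e σ) he_mem (fun σ _ τ _ h => he_inj h)
    (fun i hi => ?_) fun σ _ => ?_
  · obtain ⟨σ, hσ, rfl⟩ := Finset.surj_on_of_inj_on_of_card_le _ he_mem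
      (fun σ τ _ _ h => he_inj h) hcard i hi
    exact ⟨σ, hσ, rfl⟩
  · change (σ : K →+* K) _ = _
    rw [← RingHom.comp_apply, comp_rootEval, ← RingHom.comp_apply, rootEval_comp_phiC]
    congr 2
    exact (hζ.autToPow_spec ℚ σ).symm

theorem norm_embedding_rootEval_eq_one (w : (MonoidAlgebra ℤ (Cp p))ˣ)
    {v : MonoidAlgebra ℤ (Cp p)} (hv : v * phiC p (p - 1) v = ∏ i ∈ Finset.Ico 1 p, phiC p i w)
    (τ : K →+* ℂ) : ‖τ (rootEval ζ hζ.pow_eq_one v)‖ = 1 := by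
  have hnorm : |Algebra.norm ℚ (rootEval ζ hζ.pow_eq_one w)| = 1 := by
    rw [← algebraMap_rootEval_toInteger hζ, ← RingOfIntegers.coe_norm]
    exact isUnit_iff_norm.1 (w.isUnit.map _)
  have hτ (α : MonoidAlgebra ℤ (Cp p)) : τ (rootEval ζ hζ.pow_eq_one α) = rootEval (τ ζ) _ α :=
    RingHom.congr_fun (comp_rootEval τ ζ _) α
  have hconj : conj (τ (rootEval ζ hζ.pow_eq_one v)) =
      τ (rootEval ζ hζ.pow_eq_one (phiC p (p - 1) v)) := by
    rw [hτ, hτ, conj_rootEval]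
  have hsq : ‖τ (rootEval ζ hζ.pow_eq_one v)‖ ^ 2 =
      Algebra.norm ℚ (rootEval ζ hζ.pow_eq_one w) := by
    have h := Complex.mul_conj' (τ (rootEval ζ hζ.pow_eq_one v))
    rw [hconj, ← map_mul, ← map_mul, hv, rootEval_prod_phiC_eq_algebraMap_norm hζ, eq_ratCast,
      map_ratCast] at h
    exact_mod_cast h.symm
  have hN : Algebra.norm ℚ (rootEval ζ hζ.pow_eq_one w) = 1 := by
    have h0 : (0 : ℝ) ≤ Algebra.norm ℚ (rootEval ζ hζ.pow_eq_one w) := hsq ▸ sq_nonneg _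
    rwa [abs_of_nonneg (by exact_mod_cast h0)] at hnorm
  rw [hN, Rat.cast_one] at hsq
  exact (pow_eq_one_iff_of_nonneg (norm_nonneg _) two_ne_zero).1 hsq

theorem rootEval_eq_one_of_mul_phiC_eq_prod_phiC (w : (MonoidAlgebra ℤ (Cp p))ˣ)
    {v : MonoidAlgebra ℤ (Cp p)} (hv : v * phiC p (p - 1) v = ∏ i ∈ Finset.Ico 1 p, phiC p i w)
    (hcong : (MonoidAlgebra.of ℤ (Cp p) (tC p) - 1) ^ 2 ∣ v - 1) :
    rootEval ζ hζ.pow_eq_one v = 1 := by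
  let ψ := rootEval hζ.toInteger hζ.toInteger_isPrimitiveRoot.pow_eq_one
  have hψ : algebraMap (𝓞 K) K (ψ v) = rootEval ζ hζ.pow_eq_one v :=
    algebraMap_rootEval_toInteger hζ v
  obtain ⟨k, hk, hxk⟩ := Embeddings.pow_eq_one_of_norm_eq_one K ℂ
    (hψ ▸ RingOfIntegers.isIntegral_coe (ψ v)) (norm_embedding_rootEval_eq_one hζ w hv)
  have hcong' : (hζ.toInteger - 1) ^ 2 ∣ ψ v - 1 := by
    simpa only [map_pow, map_sub, map_one, ψ, rootEval_of_tC] using map_dvd ψ hcong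
  rw [← hψ, eq_one_of_pow_eq_one_of_sq_dvd_sub_one hζ hk.ne'
    (RingOfIntegers.coe_injective (by rw [map_pow, hψ, hxk, map_one])) hcong', map_one]

end CyclotomicField

end CpGroupRing

open CpGroupRing in
theorem half_norm_of_U2_unit_eq_one
    (p : ℕ) [Fact p.Prime] (hp2 : p ≠ 2)
    (w : (MonoidAlgebra ℤ (Cp p))ˣ)
    (hw : augm (w : MonoidAlgebra ℤ (Cp p)) = 1)
    (hw2 : (w : MonoidAlgebra ℤ (Cp p)) - 1 ∈
        Ideal.span {(MonoidAlgebra.of ℤ (Cp p) (tC p) - 1) ^ 2}) :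
    ∏ i ∈ Finset.Icc 1 ((p - 1) / 2), phiC p i (w : MonoidAlgebra ℤ (Cp p)) = 1 := by
  have hodd : p = 2 * ((p - 1) / 2) + 1 := by
    obtain ⟨k, hk⟩ := (Fact.out : p.Prime).odd_of_ne_two hp2
    omega
  have : IsCyclotomicExtension {p} ℚ (CyclotomicField p ℚ) :=
    CyclotomicField.isCyclotomicExtension p ℚ
  have hζ := IsCyclotomicExtension.zeta_spec p ℚ (CyclotomicField p ℚ)
  refine eq_of_augm_eq_of_rootEval_eq hζ ?_ ?_
  · rw [augm_prod_phiC hw, augm_eq_rootEval_one, map_one]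
  · rw [map_one]
    refine rootEval_eq_one_of_mul_phiC_eq_prod_phiC hζ w (prod_phiC_mul_phiC_prod hodd w) ?_
    exact dvd_prod_sub_one fun i _ =>
      sq_sub_one_dvd_phiC_sub_one (Ideal.mem_span_singleton.1 hw2) i
end
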